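/- arXiv:1010.1453 — 4 statements merged into one kernel-verified Lean document; each statement's English description precedes it below -/
import Mathlib

section
/- Scalar version of Theorem 1.5 (inversion of 1+m for smoothing Mellin symbols with asymptotics): for every Mellin asymptotic type R and every m ∈ M^{−∞}_R there exist a Mellin asymptotic type S and a function l ∈ M^{−∞}_S such that (1+m(z))·(1+l(z)) = 1 for all z ∈ ℂ ∖ (R ∪ S). -/
open Complex

/-- A Mellin asymptotic type: a subset of `ℂ` meeting every vertical strip
`{c ≤ Re z ≤ c'}` in a finite set. -/
def IsMellinAsymType (D : Set ℂ) : Prop :=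
  ∀ c c' : ℝ, c ≤ c' → (D ∩ {z : ℂ | c ≤ z.re ∧ z.re ≤ c'}).Finite

/-- The class `M^{-∞}_D` (scalar case): functions holomorphic off `D`,
meromorphic at every point of `D`, and rapidly decreasing on every vertical
strip for large `|Im z|`. -/
def MellinSmoothing (D : Set ℂ) (m : ℂ → ℂ) : Prop :=
  DifferentiableOn ℂ m Dᶜ ∧
  (∀ d ∈ D, MeromorphicAt m d) ∧
  ∀ a b : ℝ, ∀ N : ℕ, ∃ C ρ₀ : ℝ, ∀ β ∈ Set.Icc a b, ∀ ρ : ℝ, ρ₀ ≤ |ρ| →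
    ‖m ((β : ℂ) + ρ * Complex.I)‖ ≤ C * (1 + |ρ|) ^ (-(N : ℝ))

/-!
With `l := (1 + m)⁻¹ - 1` the identity holds wherever `1 + m ≠ 0`, so the point is that the zero
set of `1 + m` is again a Mellin asymptotic type. Since `m` decays on vertical strips, `1 + m` has
no zeros high up in a strip, so the zeros in a strip lie in a compact box. The function `1 + m` is
meromorphic on all of `ℂ` and nonvanishing near a point high up on the imaginary axis, hence its
zeros are isolated and only finitely many lie in the box. Decay of `l` follows from
`‖l‖ ≤ 2 ‖m‖` wherever `‖m‖ ≤ 1/2`.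
-/

open Filter Topology Set

theorem Meromorphic.finite_inter_setOf_eq_zero {𝕜 E : Type*} [RCLike 𝕜] [NormedAddCommGroup E]
    [NormedSpace 𝕜 E] {f : 𝕜 → E} (hf : Meromorphic f) {w : 𝕜}
    (hw : meromorphicOrderAt f w ≠ ⊤) {K : Set 𝕜} (hK : IsCompact K) :
    (K ∩ {z | f z = 0}).Finite := by
  have hne_top : ∀ u, meromorphicOrderAt f u ≠ ⊤ :=
    hf.exists_meromorphicOrderAt_ne_top_iff_forall.1 ⟨w, hw⟩
  have hcod : {z | f z ≠ 0} ∈ codiscreteWithin K :=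
    codiscreteWithin_mono (subset_univ K)
      ((meromorphicOn_univ.2 hf).eventually_codiscreteWithin_apply_ne_zero fun u _ => hne_top u)
  simpa [sdiff_eq, compl_ofPred] using hK.finite_sdiff_of_mem_codiscreteWithin hcod

theorem half_le_norm_one_add {𝕜 : Type*} [NormedRing 𝕜] [NormOneClass 𝕜] {x : 𝕜}
    (hx : ‖x‖ ≤ 1 / 2) : 1 / 2 ≤ ‖1 + x‖ := by
  have htri := norm_sub_norm_le (1 : 𝕜) (-x)
  rw [norm_one, norm_neg, sub_neg_eq_add] at htri
  linarith

theorem norm_inv_one_add_sub_one_le {𝕜 : Type*} [NormedDivisionRing 𝕜] {x : 𝕜}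
    (hx : ‖x‖ ≤ 1 / 2) : ‖(1 + x)⁻¹ - 1‖ ≤ 2 * ‖x‖ := by
  have hnorm := half_le_norm_one_add hx
  have hne : 1 + x ≠ 0 := norm_pos_iff.1 (by linarith)
  have hid : (1 + x)⁻¹ - 1 = -((1 + x)⁻¹ * x) := by
    rw [← mul_neg, ← sub_add_cancel_left 1 x, mul_sub, mul_one, inv_mul_cancel₀ hne]
  have hinv : ‖1 + x‖⁻¹ ≤ 2 := by
    rw [inv_le_comm₀ (by linarith) two_pos]
    linarith
  rw [hid, norm_neg, norm_mul, norm_inv]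
  exact mul_le_mul_of_nonneg_right hinv (norm_nonneg x)

namespace IsMellinAsymType

theorem isClosed {D : Set ℂ} (hD : IsMellinAsymType D) : IsClosed D := by
  refine closure_subset_iff_isClosed.1 fun x hx => ?_
  set U := re ⁻¹' Ioo (x.re - 1) (x.re + 1)
  have hU : IsOpen U := isOpen_Ioo.preimage continuous_re
  have hfin : (U ∩ D).Finite := (hD (x.re - 1) (x.re + 1) (by linarith)).subset
    fun z hz => ⟨hz.2, hz.1.1.le, hz.1.2.le⟩
  have hxU : x ∈ closure (U ∩ D) := hU.inter_closure ⟨by simp [U], hx⟩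
  rw [hfin.isClosed.closure_eq] at hxU
  exact hxU.2

theorem union {D D' : Set ℂ} (hD : IsMellinAsymType D) (hD' : IsMellinAsymType D') :
    IsMellinAsymType (D ∪ D') := fun c c' hc => by
  rw [union_inter_distrib_right]
  exact (hD c c' hc).union (hD' c c' hc)

end IsMellinAsymType

theorem isMellinAsymType_setOf_eq_zero {f : ℂ → ℂ} (hf : Meromorphic f)
    (hne : ∀ a b : ℝ, ∃ ρ : ℝ, ∀ z : ℂ, z.re ∈ Icc a b → ρ ≤ |z.im| → f z ≠ 0) :
    IsMellinAsymType {z | f z = 0} := by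
  have hw : ∃ w, meromorphicOrderAt f w ≠ ⊤ := by
    obtain ⟨ρ, hρ⟩ := hne (-1) 1
    set w : ℂ := (|ρ| + 1 : ℝ) * I
    have hre : ∀ᶠ z in 𝓝 w, z.re ∈ Icc (-1) 1 :=
      continuous_re.continuousAt.preimage_mem_nhds (Icc_mem_nhds (by simp [w]) (by simp [w]))
    have him : ∀ᶠ z in 𝓝 w, ρ < |z.im| :=
      continuous_im.abs.continuousAt.eventually (eventually_gt_nhds (by
        simp only [w, mul_im, ofReal_re, I_im, ofReal_im, I_re]
        rw [abs_of_pos (by positivity)]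
        linarith [le_abs_self ρ]))
    refine ⟨w, (meromorphicOrderAt_ne_top_iff_eventually_ne_zero (hf w)).2
      (eventually_nhdsWithin_of_eventually_nhds ?_)⟩
    filter_upwards [hre, him] with z hz hz' using hρ z hz hz'.le
  obtain ⟨w, hw⟩ := hw
  intro c c' _
  obtain ⟨ρ, hρ⟩ := hne c c'
  refine ((hf.finite_inter_setOf_eq_zero hw
    ((isCompact_Icc (a := c) (b := c')).reProdIm (isCompact_Icc (a := -ρ) (b := ρ))))).subset ?_
  rintro z ⟨hz, hre⟩
  refine ⟨⟨hre, abs_le.1 ?_⟩, hz⟩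
  by_contra! h
  exact hρ z hre h.le hz

namespace MellinSmoothing

variable {D : Set ℂ} {m : ℂ → ℂ}

theorem exists_norm_le (hm : MellinSmoothing D m) (a b : ℝ) {ε : ℝ} (hε : 0 < ε) :
    ∃ ρ : ℝ, ∀ z : ℂ, z.re ∈ Icc a b → ρ ≤ |z.im| → ‖m z‖ ≤ ε := by
  obtain ⟨C, ρ₀, hC⟩ := hm.2.2 a b 1
  refine ⟨max ρ₀ (|C| / ε), fun z hre him => ?_⟩
  have hbound := hC z.re hre z.im (le_of_max_le_left him)
  rw [re_add_im, Nat.cast_one, Real.rpow_neg_one, ← div_eq_mul_inv,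
    le_div_iff₀ (by positivity)] at hbound
  have hC_le : |C| ≤ |z.im| * ε := (div_le_iff₀ hε).1 (le_of_max_le_right him)
  by_contra! hgt
  have hlt := mul_lt_mul_of_pos_right hgt (by positivity : (0 : ℝ) < 1 + |z.im|)
  linarith [le_abs_self C]

theorem meromorphic (hD : IsMellinAsymType D) (hm : MellinSmoothing D m) : Meromorphic m :=
  fun x => by
    by_cases hx : x ∈ D
    · exact hm.2.1 x hx
    · exact (hm.1.analyticAt (hD.isClosed.isOpen_compl.mem_nhds hx)).meromorphicAt

theorem inv_one_add_sub_one (hD : IsMellinAsymType D) (hm : MellinSmoothing D m) :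
    MellinSmoothing (D ∪ {z | 1 + m z = 0}) fun z => (1 + m z)⁻¹ - 1 := by
  have hmer := hm.meromorphic hD
  refine ⟨?_, fun d _ => by fun_prop, fun a b N => ?_⟩
  · refine (((differentiableOn_const 1).add (hm.1.mono ?_)).inv ?_).sub_const 1
    · exact compl_subset_compl.2 subset_union_left
    · exact fun z hz h => hz (Or.inr h)
  obtain ⟨C, ρ₀, hC⟩ := hm.2.2 a b N
  obtain ⟨ρ₁, hρ₁⟩ := hm.exists_norm_le a b (by norm_num : (0 : ℝ) < 1 / 2)
  refine ⟨2 * C, max ρ₀ ρ₁, fun β hβ ρ hρ => ?_⟩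
  have hsmall : ‖m (β + ρ * I)‖ ≤ 1 / 2 :=
    hρ₁ _ (by simpa using hβ) (by simpa using le_of_max_le_right hρ)
  calc ‖(1 + m (β + ρ * I))⁻¹ - 1‖ ≤ 2 * ‖m (β + ρ * I)‖ := norm_inv_one_add_sub_one_le hsmall
    _ ≤ 2 * (C * (1 + |ρ|) ^ (-(N : ℝ))) := by gcongr; exact hC β hβ ρ (le_of_max_le_left hρ)
    _ = 2 * C * (1 + |ρ|) ^ (-(N : ℝ)) := by ring

end MellinSmoothing

/-- Inversion of `1+m` for smoothing Mellin symbols with asymptotics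
(scalar version): for every `m ∈ M^{-∞}_R` there are an asymptotic type `S`
and `l ∈ M^{-∞}_S` with `(1+m)(1+l) = 1` off `R ∪ S`. -/
theorem inverse_of_one_add_smoothing_mellin_symbol
    (R : Set ℂ) (hR : IsMellinAsymType R) (m : ℂ → ℂ)
    (hm : MellinSmoothing R m) :
    ∃ S : Set ℂ, IsMellinAsymType S ∧ ∃ l : ℂ → ℂ, MellinSmoothing S l ∧
      ∀ z : ℂ, z ∉ R ∪ S → (1 + m z) * (1 + l z) = 1 := by
  have hmer : Meromorphic fun z => 1 + m z := (Meromorphic.const 1).add (hm.meromorphic hR)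
  have hne : ∀ a b : ℝ, ∃ ρ : ℝ, ∀ z : ℂ, z.re ∈ Icc a b → ρ ≤ |z.im| → 1 + m z ≠ 0 := by
    intro a b
    obtain ⟨ρ, hρ⟩ := hm.exists_norm_le a b (by norm_num : (0 : ℝ) < 1 / 2)
    refine ⟨ρ, fun z hre him => norm_pos_iff.1 ?_⟩
    linarith [half_le_norm_one_add (hρ z hre him)]
  refine ⟨R ∪ {z | 1 + m z = 0}, hR.union (isMellinAsymType_setOf_eq_zero hmer hne), _,
    hm.inv_one_add_sub_one hR, fun z hz => ?_⟩
  have hz0 : 1 + m z ≠ 0 := fun h => hz (Or.inr (Or.inr h))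
  rw [add_sub_cancel, mul_inv_cancel₀ hz0]
end

section
/- Scalar version of Theorem 1.4 (multiplicativity of meromorphic Mellin symbols): for all μ, ν ∈ ℝ and all Mellin asymptotic types R, Q, if f ∈ M^μ_R and g ∈ M^ν_Q then there exists a Mellin asymptotic type S with f·g ∈ M^{μ+ν}_S; moreover, if f ∈ M^{−∞}_R or g ∈ M^{−∞}_Q, then f·g ∈ M^{−∞}_S. -/
open Complex

/-- The class `M^μ_O` of entire Mellin symbols of order `μ` (scalar case). -/
def MellinHolO (μ : ℝ) (h : ℂ → ℂ) : Prop :=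
  Differentiable ℂ h ∧ ∀ a b : ℝ, ∀ k : ℕ, ∃ C : ℝ,
    ∀ β ∈ Set.Icc a b, ∀ ρ : ℝ,
      ‖iteratedDeriv k (fun t : ℝ => h ((β : ℂ) + t * I)) ρ‖ ≤ C * (1 + |ρ|) ^ (μ - k)

/-- The class `M^μ_R = M^μ_O + M^{-∞}_R` (scalar case). -/
def MellinClass (μ : ℝ) (R : Set ℂ) (f : ℂ → ℂ) : Prop :=
  ∃ h m : ℂ → ℂ, MellinHolO μ h ∧ MellinSmoothing R m ∧
    ∀ z ∉ R, f z = h z + m z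

/-! ### Auxiliary material -/

open Set Filter Metric Topology

/-- Strip bound predicate: `‖u(β+iρ)‖ ≤ C (1+|ρ|)^p` on the strip `a ≤ Re ≤ b`
for large `|ρ|`. -/
def MellinSB (a b p : ℝ) (u : ℂ → ℂ) : Prop :=
  ∃ C ρ₀ : ℝ, 0 ≤ C ∧ ∀ β ∈ Set.Icc a b, ∀ ρ : ℝ, ρ₀ ≤ |ρ| →
    ‖u ((β : ℂ) + ρ * I)‖ ≤ C * (1 + |ρ|) ^ p

lemma MellinSB.mono {a b p q : ℝ} {u : ℂ → ℂ} (hpq : p ≤ q) (h : MellinSB a b p u) :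
    MellinSB a b q u := by
  obtain ⟨C, ρ₀, hC, hb⟩ := h
  refine ⟨C, ρ₀, hC, fun β hβ ρ hρ => (hb β hβ ρ hρ).trans ?_⟩
  have h1 : (1:ℝ) ≤ 1 + |ρ| := by linarith [abs_nonneg ρ]
  exact mul_le_mul_of_nonneg_left (Real.rpow_le_rpow_of_exponent_le h1 hpq) hC

lemma MellinSB.mul {a b p q r : ℝ} {u v : ℂ → ℂ} (hu : MellinSB a b p u)
    (hv : MellinSB a b q v) (hr : p + q ≤ r) :
    MellinSB a b r (fun z => u z * v z) := by
  refine MellinSB.mono hr ?_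
  obtain ⟨C, ρ₀, hC, hbu⟩ := hu
  obtain ⟨D, ρ₁, hD, hbv⟩ := hv
  refine ⟨C * D, max ρ₀ ρ₁, by positivity, fun β hβ ρ hρ => ?_⟩
  have h0 : (0:ℝ) < 1 + |ρ| := by positivity
  have hu' := hbu β hβ ρ (le_trans (le_max_left _ _) hρ)
  have hv' := hbv β hβ ρ (le_trans (le_max_right _ _) hρ)
  calc ‖u ((β:ℂ) + ρ * I) * v ((β:ℂ) + ρ * I)‖
      = ‖u ((β:ℂ) + ρ * I)‖ * ‖v ((β:ℂ) + ρ * I)‖ := norm_mul _ _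
    _ ≤ (C * (1 + |ρ|) ^ p) * (D * (1 + |ρ|) ^ q) :=
        mul_le_mul hu' hv' (norm_nonneg _) (by positivity)
    _ = C * D * (1 + |ρ|) ^ (p + q) := by rw [Real.rpow_add h0]; ring

lemma MellinSB.add {a b p : ℝ} {u v : ℂ → ℂ} (hu : MellinSB a b p u)
    (hv : MellinSB a b p v) : MellinSB a b p (fun z => u z + v z) := by
  obtain ⟨C, ρ₀, hC, hbu⟩ := hu
  obtain ⟨D, ρ₁, hD, hbv⟩ := hv
  refine ⟨C + D, max ρ₀ ρ₁, by positivity, fun β hβ ρ hρ => ?_⟩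
  have hu' := hbu β hβ ρ (le_trans (le_max_left _ _) hρ)
  have hv' := hbv β hβ ρ (le_trans (le_max_right _ _) hρ)
  calc ‖u ((β:ℂ) + ρ * I) + v ((β:ℂ) + ρ * I)‖
      ≤ ‖u ((β:ℂ) + ρ * I)‖ + ‖v ((β:ℂ) + ρ * I)‖ := norm_add_le _ _
    _ ≤ C * (1 + |ρ|) ^ p + D * (1 + |ρ|) ^ p := add_le_add hu' hv'
    _ = (C + D) * (1 + |ρ|) ^ p := by ring

lemma MellinSB.congr {a b p : ℝ} {u v : ℂ → ℂ} (h : MellinSB a b p u)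
    (he : ∃ ρ₂ : ℝ, ∀ β ∈ Set.Icc a b, ∀ ρ : ℝ, ρ₂ ≤ |ρ| →
      u ((β : ℂ) + ρ * I) = v ((β : ℂ) + ρ * I)) :
    MellinSB a b p v := by
  obtain ⟨C, ρ₀, hC, hb⟩ := h
  obtain ⟨ρ₂, he⟩ := he
  refine ⟨C, max ρ₀ ρ₂, hC, fun β hβ ρ hρ => ?_⟩
  rw [← he β hβ ρ (le_trans (le_max_right _ _) hρ)]
  exact hb β hβ ρ (le_trans (le_max_left _ _) hρ)

/-- An entire symbol of order `μ` satisfies the strip bound of order `μ`. -/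
lemma MellinHolO.sb {μ : ℝ} {h : ℂ → ℂ} (hh : MellinHolO μ h) (a b : ℝ) :
    MellinSB a b μ h := by
  obtain ⟨C, hC⟩ := hh.2 a b 0
  refine ⟨max C 0, 0, le_max_right _ _, fun β hβ ρ _ => ?_⟩
  have := hC β hβ ρ
  simp only [iteratedDeriv_zero, Nat.cast_zero, sub_zero] at this
  calc ‖h ((β:ℂ) + ρ * I)‖ ≤ C * (1 + |ρ|) ^ μ := this
    _ ≤ max C 0 * (1 + |ρ|) ^ μ :=
        mul_le_mul_of_nonneg_right (le_max_left _ _) (by positivity)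

/-- A smoothing symbol satisfies the strip bound of any order. -/
lemma MellinSmoothing.sb {D : Set ℂ} {m : ℂ → ℂ} (hm : MellinSmoothing D m)
    (a b p : ℝ) : MellinSB a b p m := by
  obtain ⟨C, ρ₀, hb⟩ := hm.2.2 a b ⌈max (-p) 0⌉₊
  have hp : -(⌈max (-p) 0⌉₊ : ℝ) ≤ p := by
    have : -p ≤ (⌈max (-p) 0⌉₊ : ℝ) := (le_max_left _ _).trans (Nat.le_ceil _)
    linarith
  refine MellinSB.mono hp ⟨max C 0, ρ₀, le_max_right _ _, fun β hβ ρ hρ => ?_⟩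
  calc ‖m ((β:ℂ) + ρ * I)‖ ≤ C * (1 + |ρ|) ^ (-(⌈max (-p) 0⌉₊ : ℝ)) := hb β hβ ρ hρ
    _ ≤ max C 0 * (1 + |ρ|) ^ (-(⌈max (-p) 0⌉₊ : ℝ)) :=
        mul_le_mul_of_nonneg_right (le_max_left _ _) (by positivity)

/-- Points far up or down in a strip avoid an asymptotic type. -/
lemma IsMellinAsymType.avoid {S : Set ℂ} (hS : IsMellinAsymType S) (a b : ℝ) :
    ∃ ρ₂ : ℝ, ∀ β ∈ Set.Icc a b, ∀ ρ : ℝ, ρ₂ ≤ |ρ| → ((β : ℂ) + ρ * I) ∉ S := by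
  by_cases hab : a ≤ b
  · have hfin := hS a b hab
    obtain ⟨M, hM⟩ := (hfin.image fun z => |z.im|).bddAbove
    refine ⟨M + 1, fun β hβ ρ hρ hmem => ?_⟩
    have hre : ((β : ℂ) + ρ * I).re = β := by simp
    have him : ((β : ℂ) + ρ * I).im = ρ := by simp
    have hz : ((β : ℂ) + ρ * I) ∈ S ∩ {z : ℂ | a ≤ z.re ∧ z.re ≤ b} :=
      ⟨hmem, by rw [Set.mem_setOf_eq, hre]; exact ⟨hβ.1, hβ.2⟩⟩
    have hmem' : |((β : ℂ) + ρ * I).im| ∈ (fun z : ℂ => |z.im|) '' _ := ⟨_, hz, rfl⟩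
    have hle := hM hmem'
    rw [him] at hle
    linarith
  · exact ⟨0, fun β hβ => absurd (hβ.1.trans hβ.2) hab⟩

/-- Near any point, the punctured plane eventually avoids an asymptotic type. -/
lemma IsMellinAsymType.eventually_not_mem {S : Set ℂ} (hS : IsMellinAsymType S)
    (z : ℂ) : ∀ᶠ w in 𝓝[≠] z, w ∉ S := by
  have hfin : (S ∩ {w : ℂ | z.re - 1 ≤ w.re ∧ w.re ≤ z.re + 1}).Finite :=
    hS (z.re - 1) (z.re + 1) (by linarith)
  set F := (S ∩ {w : ℂ | z.re - 1 ≤ w.re ∧ w.re ≤ z.re + 1}) \ {z} with hF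
  have hFz : z ∉ F := fun h => h.2 rfl
  have hFc : Fᶜ ∈ 𝓝 z := ((hfin.diff (t := {z})).isClosed.isOpen_compl).mem_nhds hFz
  have hball : Metric.ball z 1 ∈ 𝓝 z := Metric.ball_mem_nhds z one_pos
  filter_upwards [nhdsWithin_le_nhds hFc, nhdsWithin_le_nhds hball,
    self_mem_nhdsWithin] with w hw1 hw2 hw3 hwS
  apply hw1
  have hre : |w.re - z.re| ≤ dist w z := by
    rw [Complex.dist_eq, ← Complex.sub_re]
    exact Complex.abs_re_le_norm _
  have hd : dist w z < 1 := Metric.mem_ball.mp hw2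
  have h1 := neg_abs_le (w.re - z.re)
  have h2 := le_abs_self (w.re - z.re)
  exact ⟨⟨hwS, by linarith, by linarith⟩, hw3⟩

/-- The complement of an asymptotic type is open. -/
lemma IsMellinAsymType.isOpen_compl {S : Set ℂ} (hS : IsMellinAsymType S) :
    IsOpen Sᶜ := by
  rw [isOpen_iff_eventually]
  intro z hz
  have hfin : (S ∩ {w : ℂ | z.re - 1 ≤ w.re ∧ w.re ≤ z.re + 1}).Finite :=
    hS (z.re - 1) (z.re + 1) (by linarith)
  have hFz : z ∉ S ∩ {w : ℂ | z.re - 1 ≤ w.re ∧ w.re ≤ z.re + 1} := fun h => hz h.1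
  have hFc : (S ∩ {w : ℂ | z.re - 1 ≤ w.re ∧ w.re ≤ z.re + 1})ᶜ ∈ 𝓝 z :=
    (hfin.isClosed.isOpen_compl).mem_nhds hFz
  have hball : Metric.ball z 1 ∈ 𝓝 z := Metric.ball_mem_nhds z one_pos
  filter_upwards [hFc, hball] with w hw1 hw2 hwS
  apply hw1
  have hre : |w.re - z.re| ≤ dist w z := by
    rw [Complex.dist_eq, ← Complex.sub_re]
    exact Complex.abs_re_le_norm _
  have hd : dist w z < 1 := Metric.mem_ball.mp hw2
  have h1 := neg_abs_le (w.re - z.re)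
  have h2 := le_abs_self (w.re - z.re)
  exact ⟨hwS, by linarith, by linarith⟩

/-- A smoothing symbol is differentiable off its asymptotic type. -/
lemma MellinSmoothing.differentiableAt {D : Set ℂ} {m : ℂ → ℂ}
    (hD : IsMellinAsymType D) (hm : MellinSmoothing D m) {z : ℂ} (hz : z ∉ D) :
    DifferentiableAt ℂ m z :=
  (hm.1.differentiableAt (hD.isOpen_compl.mem_nhds hz))

/-- A smoothing symbol is meromorphic everywhere. -/
lemma MellinSmoothing.meromorphicAt {D : Set ℂ} {m : ℂ → ℂ}
    (hD : IsMellinAsymType D) (hm : MellinSmoothing D m) (z : ℂ) :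
    MeromorphicAt m z := by
  by_cases hz : z ∈ D
  · exact hm.2.1 z hz
  · exact (hm.1.analyticAt (hD.isOpen_compl.mem_nhds hz)).meromorphicAt

/-- Product of entire Mellin symbols. -/
lemma MellinHolO.mul {μ ν : ℝ} {h h' : ℂ → ℂ} (hh : MellinHolO μ h)
    (hh' : MellinHolO ν h') : MellinHolO (μ + ν) (fun z => h z * h' z) := by
  refine ⟨hh.1.mul hh'.1, fun a b k => ?_⟩
  choose C hC using hh.2 a b
  choose D hD using hh'.2 a b
  refine ⟨∑ i ∈ Finset.range (k + 1),
    (k.choose i : ℝ) * max (C i) 0 * max (D (k - i)) 0, fun β hβ ρ => ?_⟩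
  set F := fun t : ℝ => h ((β : ℂ) + t * I) with hFdef
  set G := fun t : ℝ => h' ((β : ℂ) + t * I) with hGdef
  have hline : ContDiff ℝ (⊤ : ℕ∞) (fun t : ℝ => (β : ℂ) + t * I) :=
    contDiff_const.add (ofRealCLM.contDiff.mul contDiff_const)
  have hF : ContDiff ℝ (⊤ : ℕ∞) F := (hh.1.contDiff.restrict_scalars ℝ).comp hline
  have hG : ContDiff ℝ (⊤ : ℕ∞) G := (hh'.1.contDiff.restrict_scalars ℝ).comp hline
  have h0 : (0:ℝ) < 1 + |ρ| := by positivity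
  have h1 : (1:ℝ) ≤ 1 + |ρ| := by linarith [abs_nonneg ρ]
  have key : ‖iteratedDeriv k (fun t : ℝ => F t * G t) ρ‖ ≤
      ∑ i ∈ Finset.range (k + 1),
        (k.choose i : ℝ) * ‖iteratedDeriv i F ρ‖ * ‖iteratedDeriv (k - i) G ρ‖ := by
    rw [← norm_iteratedFDeriv_eq_norm_iteratedDeriv]
    simp_rw [← norm_iteratedFDeriv_eq_norm_iteratedDeriv]
    exact norm_iteratedFDeriv_mul_le hF hG ρ (by exact_mod_cast le_top)
  refine key.trans ?_
  rw [Finset.sum_mul]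
  refine Finset.sum_le_sum fun i hi => ?_
  have hik : i ≤ k := Nat.lt_succ_iff.mp (Finset.mem_range.mp hi)
  have hCi : ‖iteratedDeriv i F ρ‖ ≤ max (C i) 0 * (1 + |ρ|) ^ (μ - i) :=
    (hC i β hβ ρ).trans (mul_le_mul_of_nonneg_right (le_max_left _ _) (by positivity))
  have hDi : ‖iteratedDeriv (k - i) G ρ‖ ≤
      max (D (k - i)) 0 * (1 + |ρ|) ^ (ν - (k - i : ℕ)) :=
    (hD (k - i) β hβ ρ).trans
      (mul_le_mul_of_nonneg_right (le_max_left _ _) (by positivity))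
  have hexp : (μ - i) + (ν - (k - i : ℕ)) = μ + ν - k := by
    rw [Nat.cast_sub hik]; ring
  calc (k.choose i : ℝ) * ‖iteratedDeriv i F ρ‖ * ‖iteratedDeriv (k - i) G ρ‖
      ≤ (k.choose i : ℝ) * (max (C i) 0 * (1 + |ρ|) ^ (μ - i)) *
        (max (D (k - i)) 0 * (1 + |ρ|) ^ (ν - (k - i : ℕ))) := by
        refine mul_le_mul (mul_le_mul_of_nonneg_left hCi (by positivity)) hDi
          (norm_nonneg _) (by positivity)
    _ = (k.choose i : ℝ) * max (C i) 0 * max (D (k - i)) 0 *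
        ((1 + |ρ|) ^ (μ - i) * (1 + |ρ|) ^ (ν - (k - i : ℕ))) := by ring
    _ = (k.choose i : ℝ) * max (C i) 0 * max (D (k - i)) 0 * (1 + |ρ|) ^ (μ + ν - k) := by
        rw [← Real.rpow_add h0, hexp]

/-- Key lemma: product of a smoothing symbol with a symbol of class `M^ν_Q`. -/
lemma mellin_smoothing_mul_class {ν : ℝ} {R Q : Set ℂ} (hR : IsMellinAsymType R)
    (hQ : IsMellinAsymType Q) {f g : ℂ → ℂ} (hfs : MellinSmoothing R f)
    (hg : MellinClass ν Q g) : MellinSmoothing (R ∪ Q) (fun z => f z * g z) := by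
  obtain ⟨hg_h, mg, Hhg, Hmg, hgeq⟩ := hg
  have hSopen : IsOpen (R ∪ Q)ᶜ := by
    rw [Set.compl_union]
    exact hR.isOpen_compl.inter hQ.isOpen_compl
  refine ⟨?_, ?_, ?_⟩
  · -- differentiability off R ∪ Q
    intro z hz
    rw [Set.mem_compl_iff, Set.mem_union] at hz
    push_neg at hz
    have hfd : DifferentiableAt ℂ f z := hfs.differentiableAt hR hz.1
    have hgea : g =ᶠ[𝓝 z] fun w => hg_h w + mg w := by
      filter_upwards [hQ.isOpen_compl.mem_nhds hz.2] with w hw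
      exact hgeq w hw
    have hgd : DifferentiableAt ℂ g z :=
      (((Hhg.1 z).add (Hmg.differentiableAt hQ hz.2)).congr_of_eventuallyEq hgea)
    exact (hfd.mul hgd).differentiableWithinAt
  · -- meromorphy
    intro d _
    have hfm : MeromorphicAt f d := hfs.meromorphicAt hR d
    have hgm : MeromorphicAt g d := by
      refine MeromorphicAt.congr (((Hhg.1.analyticAt d).meromorphicAt).add
        (Hmg.meromorphicAt hQ d)) ?_
      filter_upwards [hQ.eventually_not_mem d] with w hw
      exact (hgeq w hw).symm
    exact hfm.mul hgm
  · -- decay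
    intro a b N
    have hgsb : MellinSB a b (max ν 0 + 1) g := by
      refine MellinSB.congr (MellinSB.add ((Hhg.sb a b).mono ?_)
        (Hmg.sb a b (max ν 0 + 1))) ?_
      · linarith [le_max_left ν 0]
      · obtain ⟨ρ₂, hρ₂⟩ := hQ.avoid a b
        exact ⟨ρ₂, fun β hβ ρ hρ => (hgeq _ (hρ₂ β hβ ρ hρ)).symm⟩
    have hfsb : MellinSB a b (-(N : ℝ) - (max ν 0 + 1)) f :=
      hfs.sb a b _
    have : MellinSB a b (-(N : ℝ)) (fun z => f z * g z) :=
      hfsb.mul hgsb (by ring_nf; rfl)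
    obtain ⟨C, ρ₀, _, hb⟩ := this
    exact ⟨C, ρ₀, hb⟩

/-- Multiplicativity of meromorphic Mellin symbols (scalar version of
Theorem 1.4): `f ∈ M^μ_R` and `g ∈ M^ν_Q` imply `f·g ∈ M^{μ+ν}_S` for some
resulting asymptotic type `S`; if moreover `f ∈ M^{-∞}_R` or `g ∈ M^{-∞}_Q`,
then `f·g ∈ M^{-∞}_S`. -/
theorem mellin_symbol_product
    (μ ν : ℝ) (R Q : Set ℂ) (hR : IsMellinAsymType R) (hQ : IsMellinAsymType Q)
    (f g : ℂ → ℂ) (hf : MellinClass μ R f) (hg : MellinClass ν Q g) :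
    ∃ S : Set ℂ, IsMellinAsymType S ∧
      MellinClass (μ + ν) S (fun z => f z * g z) ∧
      ((MellinSmoothing R f ∨ MellinSmoothing Q g) →
        MellinSmoothing S (fun z => f z * g z)) := by
  obtain ⟨hf_h, mf, Hhf, Hmf, hfeq⟩ := hf
  obtain ⟨hg_h, mg, Hhg, Hmg, hgeq⟩ := hg
  refine ⟨R ∪ Q, ?_, ?_, ?_⟩
  · -- R ∪ Q is an asymptotic type
    intro c c' hcc
    rw [Set.union_inter_distrib_right]
    exact (hR c c' hcc).union (hQ c c' hcc)
  · -- class membership of the product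
    have hSasym : IsMellinAsymType (R ∪ Q) := by
      intro c c' hcc
      rw [Set.union_inter_distrib_right]
      exact (hR c c' hcc).union (hQ c c' hcc)
    have hSopen : IsOpen (R ∪ Q)ᶜ := hSasym.isOpen_compl
    refine ⟨fun z => hf_h z * hg_h z,
      fun z => f z * g z - hf_h z * hg_h z, Hhf.mul Hhg, ⟨?_, ?_, ?_⟩,
      fun z _ => by ring⟩
    · -- differentiability of the smoothing part
      intro z hz
      have hz' := hz
      rw [Set.mem_compl_iff, Set.mem_union] at hz'
      push_neg at hz'
      have heq : (fun w => f w * g w - hf_h w * hg_h w) =ᶠ[𝓝 z]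
          fun w => (hf_h w + mf w) * (hg_h w + mg w) - hf_h w * hg_h w := by
        filter_upwards [hSopen.mem_nhds hz] with w hw
        simp only [Set.mem_compl_iff, Set.mem_union, not_or] at hw
        rw [hfeq w hw.1, hgeq w hw.2]
      refine (DifferentiableAt.congr_of_eventuallyEq ?_ heq).differentiableWithinAt
      exact (((Hhf.1 z).add (Hmf.differentiableAt hR hz'.1)).mul
        ((Hhg.1 z).add (Hmg.differentiableAt hQ hz'.2))).sub
        ((Hhf.1 z).mul (Hhg.1 z))
    · -- meromorphy of the smoothing part
      intro d _
      have hmero : MeromorphicAt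
          (fun w => (hf_h w + mf w) * (hg_h w + mg w) - hf_h w * hg_h w) d :=
        ((((Hhf.1.analyticAt d).meromorphicAt).add (Hmf.meromorphicAt hR d)).mul
          (((Hhg.1.analyticAt d).meromorphicAt).add (Hmg.meromorphicAt hQ d))).sub
          (((Hhf.1.analyticAt d).meromorphicAt).mul ((Hhg.1.analyticAt d).meromorphicAt))
      refine MeromorphicAt.congr hmero ?_
      filter_upwards [hSasym.eventually_not_mem d] with w hw
      simp only [Set.mem_union, not_or] at hw
      rw [hfeq w hw.1, hgeq w hw.2]
    · -- decay of the smoothing part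
      intro a b N
      have hsb : MellinSB a b (-(N : ℝ))
          (fun w => hf_h w * mg w + (mf w * hg_h w + mf w * mg w)) := by
        refine MellinSB.add ((Hhf.sb a b).mul (Hmg.sb a b (-(N:ℝ) - μ)) (by ring_nf; rfl))
          (MellinSB.add ?_ ?_)
        · exact (Hmf.sb a b (-(N:ℝ) - ν)).mul (Hhg.sb a b) (by ring_nf; rfl)
        · exact (Hmf.sb a b (-(N:ℝ))).mul (Hmg.sb a b 0) (by simp)
      have : MellinSB a b (-(N : ℝ)) (fun w => f w * g w - hf_h w * hg_h w) := by
        refine hsb.congr ?_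
        obtain ⟨ρ₂, hρ₂⟩ := hSasym.avoid a b
        refine ⟨ρ₂, fun β hβ ρ hρ => ?_⟩
        have hw := hρ₂ β hβ ρ hρ
        simp only [Set.mem_union, not_or] at hw
        rw [hfeq _ hw.1, hgeq _ hw.2]
        ring
      obtain ⟨C, ρ₀, _, hb⟩ := this
      exact ⟨C, ρ₀, hb⟩
  · -- smoothing clause
    rintro (hfs | hgs)
    · exact mellin_smoothing_mul_class hR hQ hfs ⟨hg_h, mg, Hhg, Hmg, hgeq⟩
    · have := mellin_smoothing_mul_class hQ hR hgs ⟨hf_h, mf, Hhf, Hmf, hfeq⟩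
      rw [Set.union_comm] at this
      have heq : (fun z => g z * f z) = fun z => f z * g z := by
        funext z; ring
      rwa [heq] at this
end

section
/- Scalar version of Remark 1.3 (order improvement): let μ ∈ ℝ, R a Mellin asymptotic type, f ∈ M^μ_R, and let β ∈ ℝ satisfy Γ_β ∩ R = ∅. If the restriction ρ ↦ f(β+iρ) is a symbol of order μ−1 on ℝ, then f ∈ M^{μ−1}_R. -/
open Complex

/-- `a` is a (scalar) symbol of order `μ` on `ℝ`. -/
def IsSymbol (μ : ℝ) (a : ℝ → ℂ) : Prop :=
  ContDiff ℝ (⊤ : ℕ∞) a ∧ ∀ k : ℕ, ∃ C : ℝ, ∀ ρ : ℝ,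
    ‖iteratedDeriv k a ρ‖ ≤ C * (1 + |ρ|) ^ (μ - k)

section Aux

open Metric

lemma hasDerivAt_line (c : ℂ) (t : ℝ) : HasDerivAt (fun s : ℝ => c + (s : ℂ) * I) I t := by
  have h0 : HasDerivAt (fun s : ℝ => (s : ℂ)) 1 t := by
    simpa using (hasDerivAt_id t).ofReal_comp
  simpa using (h0.mul_const I).const_add c

lemma restrict_iteratedDeriv {g : ℂ → ℂ} {U : Set ℂ} (hU : IsOpen U)
    (hg : DifferentiableOn ℂ g U) (c : ℂ) (hline : ∀ t : ℝ, c + (t : ℂ) * I ∈ U) (k : ℕ) :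
    ∀ ρ : ℝ, iteratedDeriv k (fun t : ℝ => g (c + (t : ℂ) * I)) ρ
      = I ^ k * iteratedDeriv k g (c + (ρ : ℂ) * I) := by
  have hA : AnalyticOnNhd ℂ g U := hg.analyticOnNhd hU
  induction k with
  | zero => intro ρ; simp
  | succ k ih =>
    intro ρ
    have hfun : iteratedDeriv k (fun t : ℝ => g (c + (t : ℂ) * I))
        = fun t : ℝ => I ^ k * iteratedDeriv k g (c + (t : ℂ) * I) := funext ih
    rw [iteratedDeriv_succ, hfun]
    have hAk : AnalyticOnNhd ℂ (iteratedDeriv k g) U := by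
      rw [iteratedDeriv_eq_iterate]; exact hA.iterated_deriv k
    have hdk : HasDerivAt (iteratedDeriv k g)
        (iteratedDeriv (k+1) g (c + (ρ : ℂ) * I)) (c + (ρ : ℂ) * I) := by
      rw [iteratedDeriv_succ]
      exact ((hAk _ (hline ρ)).differentiableAt).hasDerivAt
    have hcomp : HasDerivAt (fun t : ℝ => iteratedDeriv k g (c + (t : ℂ) * I))
        ((I : ℂ) • iteratedDeriv (k+1) g (c + (ρ : ℂ) * I)) ρ :=
      by have := hdk.scomp ρ (hasDerivAt_line c ρ); exact this
    have := (hcomp.const_mul ((I : ℂ) ^ k)).deriv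
    rw [this]
    simp [smul_eq_mul, pow_succ]; ring

lemma strip_avoid {R : Set ℂ} (hR : IsMellinAsymType R) (β : ℝ)
    (hβ : ∀ z : ℂ, z.re = β → z ∉ R) :
    ∃ δ : ℝ, 0 < δ ∧ δ ≤ 1 ∧ ∀ z : ℂ, |z.re - β| < δ → z ∉ R := by
  have hfin : (R ∩ {z : ℂ | β - 1 ≤ z.re ∧ z.re ≤ β + 1}).Finite :=
    hR (β - 1) (β + 1) (by linarith)
  set S := R ∩ {z : ℂ | β - 1 ≤ z.re ∧ z.re ≤ β + 1} with hS
  by_cases hne : S.Nonempty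
  · obtain ⟨w, hwS, hwmin⟩ := Set.exists_min_image S (fun z => |z.re - β|) hfin hne
    have hw0 : 0 < |w.re - β| := by
      rcases eq_or_ne w.re β with h | h
      · exact absurd hwS.1 (hβ w h)
      · exact abs_pos.mpr (sub_ne_zero.mpr h)
    refine ⟨min |w.re - β| 1, lt_min hw0 one_pos, min_le_right _ _, fun z hz hzR => ?_⟩
    have h1 : |z.re - β| < 1 := lt_of_lt_of_le hz (min_le_right _ _)
    have hzS : z ∈ S := ⟨hzR, by constructor <;> [linarith [abs_lt.mp h1]; linarith [abs_lt.mp h1]]⟩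
    have := hwmin z hzS
    have := lt_of_lt_of_le hz (min_le_left _ _)
    linarith
  · refine ⟨1, one_pos, le_refl 1, fun z hz hzR => ?_⟩
    exact hne ⟨z, ⟨hzR, by constructor <;> [linarith [abs_lt.mp hz]; linarith [abs_lt.mp hz]]⟩⟩

lemma strip_open (β δ : ℝ) : IsOpen {z : ℂ | |z.re - β| < δ} :=
  isOpen_lt ((Complex.continuous_re.sub continuous_const).abs) continuous_const

lemma cauchy_decay {m : ℂ → ℂ} {β δ : ℝ} (hδ : 0 < δ)
    (hm : DifferentiableOn ℂ m {z : ℂ | |z.re - β| < δ})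
    (N : ℕ)
    (hdec : ∃ C ρ₀ : ℝ, 0 ≤ C ∧ ∀ z : ℂ, |z.re - β| ≤ δ / 2 → ρ₀ ≤ |z.im| →
      ‖m z‖ ≤ C * (1 + |z.im|) ^ (-(N : ℝ))) (k : ℕ) :
    ∃ C ρ₁ : ℝ, 0 ≤ C ∧ ∀ z : ℂ, |z.re - β| ≤ δ / 2 ^ (k + 1) → ρ₁ ≤ |z.im| →
      ‖iteratedDeriv k m z‖ ≤ C * (1 + |z.im|) ^ (-(N : ℝ)) := by
  set U := {z : ℂ | |z.re - β| < δ} with hUdef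
  have hU : IsOpen U := strip_open β δ
  have hA : AnalyticOnNhd ℂ m U := hm.analyticOnNhd hU
  have hAk : ∀ j : ℕ, AnalyticOnNhd ℂ (iteratedDeriv j m) U := by
    intro j; rw [iteratedDeriv_eq_iterate]; exact hA.iterated_deriv j
  induction k with
  | zero =>
    obtain ⟨C, ρ₀, hC0, hC⟩ := hdec
    exact ⟨C, ρ₀, hC0, fun z hz hρ => by
      simpa using hC z (by simpa [pow_one] using hz) hρ⟩
  | succ k ih =>
    obtain ⟨C, ρ₁, hC0, hC⟩ := ih
    set r := δ / 2 ^ (k + 2) with hrdef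
    have hr : 0 < r := div_pos hδ (by positivity)
    refine ⟨C * 2 ^ (N : ℝ) / r, max (ρ₁ + r) (2 * r), by positivity, fun z hz hρ => ?_⟩
    have hρ₁ : ρ₁ + r ≤ |z.im| := le_trans (le_max_left _ _) hρ
    have hρ₂ : 2 * r ≤ |z.im| := le_trans (le_max_right _ _) hρ
    have hball : ∀ w ∈ closedBall z r, |w.re - β| ≤ δ / 2 ^ (k + 1) := by
      intro w hw
      have h1 : |w.re - z.re| ≤ r := by
        have := Complex.abs_re_le_norm (w - z)
        simp only [Complex.sub_re] at this
        calc |w.re - z.re| ≤ ‖w - z‖ := this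
          _ ≤ r := by rwa [mem_closedBall, Complex.dist_eq] at hw
      have h2 : |z.re - β| ≤ r := by
        have : δ / 2 ^ (k + 1 + 1) = r := rfl
        linarith [hz, this]
      calc |w.re - β| ≤ |w.re - z.re| + |z.re - β| := abs_sub_le _ _ _
        _ ≤ r + r := by linarith
        _ = δ / 2 ^ (k + 1) := by rw [hrdef]; ring
    have hsub : closedBall z r ⊆ U := by
      intro w hw
      have := hball w hw
      have h2 : δ / 2 ^ (k+1) < δ := by
        apply div_lt_self hδ
        exact one_lt_pow₀ (by norm_num) (by omega)
      exact lt_of_le_of_lt this h2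
    have hdiff : DiffContOnCl ℂ (iteratedDeriv k m) (ball z r) := by
      apply DifferentiableOn.diffContOnCl
      rw [closure_ball z hr.ne']
      exact ((hAk k).differentiableOn).mono hsub
    have himle : ∀ w ∈ sphere z r, |w.im - z.im| ≤ r := by
      intro w hw
      have := Complex.abs_im_le_norm (w - z)
      simp only [Complex.sub_im] at this
      calc |w.im - z.im| ≤ ‖w - z‖ := this
        _ = r := by rwa [mem_sphere, Complex.dist_eq] at hw
    have hsph : ∀ w ∈ sphere z r, ‖iteratedDeriv k m w‖
        ≤ C * 2 ^ (N : ℝ) * (1 + |z.im|) ^ (-(N : ℝ)) := by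
      intro w hw
      have hwim : |z.im| - r ≤ |w.im| := by
        have := himle w hw
        have h3 : |w.im - z.im| = |z.im - w.im| := abs_sub_comm _ _
        have := abs_sub_abs_le_abs_sub z.im w.im
        linarith [himle w hw]
      have hbound := hC w (hball w (sphere_subset_closedBall hw))
        (by linarith : ρ₁ ≤ |w.im|)
      have hhalf : (1 + |z.im|) / 2 ≤ 1 + |w.im| := by
        have : 2 * r ≤ |z.im| := hρ₂
        have h0 : 0 ≤ |z.im| := abs_nonneg _
        nlinarith [abs_nonneg w.im]
      have hmono : (1 + |w.im|) ^ (-(N:ℝ)) ≤ ((1 + |z.im|) / 2) ^ (-(N:ℝ)) := by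
        apply Real.rpow_le_rpow_of_nonpos
        · positivity
        · exact hhalf
        · simp
      have heq : ((1 + |z.im|) / 2) ^ (-(N:ℝ)) = 2 ^ (N:ℝ) * (1 + |z.im|) ^ (-(N:ℝ)) := by
        rw [Real.div_rpow (by positivity) (by norm_num)]
        rw [Real.rpow_neg (by norm_num : (0:ℝ) ≤ 2)]
        field_simp
      calc ‖iteratedDeriv k m w‖ ≤ C * (1 + |w.im|) ^ (-(N:ℝ)) := hbound
        _ ≤ C * ((1 + |z.im|) / 2) ^ (-(N:ℝ)) := by
            exact mul_le_mul_of_nonneg_left hmono hC0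
        _ = C * 2 ^ (N : ℝ) * (1 + |z.im|) ^ (-(N : ℝ)) := by rw [heq]; ring
    have := Complex.norm_deriv_le_of_forall_mem_sphere_norm_le hr hdiff hsph
    rw [iteratedDeriv_succ]
    calc ‖deriv (iteratedDeriv k m) z‖ ≤ C * 2 ^ (N:ℝ) * (1 + |z.im|) ^ (-(N:ℝ)) / r := this
      _ = C * 2 ^ (N:ℝ) / r * (1 + |z.im|) ^ (-(N:ℝ)) := by ring

lemma m_line_bound {m : ℂ → ℂ} {β δ : ℝ} (hδ : 0 < δ)
    (hm : DifferentiableOn ℂ m {z : ℂ | |z.re - β| < δ})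
    (hdec : ∀ N : ℕ, ∃ C ρ₀ : ℝ, 0 ≤ C ∧ ∀ z : ℂ, |z.re - β| ≤ δ / 2 → ρ₀ ≤ |z.im| →
      ‖m z‖ ≤ C * (1 + |z.im|) ^ (-(N : ℝ)))
    (k : ℕ) (e : ℝ) :
    ∃ C : ℝ, ∀ ρ : ℝ, ‖iteratedDeriv k m ((β : ℂ) + (ρ : ℂ) * I)‖ ≤ C * (1 + |ρ|) ^ e := by
  set U := {z : ℂ | |z.re - β| < δ} with hUdef
  have hU : IsOpen U := strip_open β δ
  have hA : AnalyticOnNhd ℂ m U := hm.analyticOnNhd hU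
  have hAk : AnalyticOnNhd ℂ (iteratedDeriv k m) U := by
    rw [iteratedDeriv_eq_iterate]; exact hA.iterated_deriv k
  have hline : ∀ ρ : ℝ, ((β : ℂ) + (ρ : ℂ) * I) ∈ U := by
    intro ρ; simp [hUdef, hδ]
  set N : ℕ := ⌈-e⌉₊ with hNdef
  have hNe : -(N : ℝ) ≤ e := by
    have := Nat.le_ceil (-e); rw [← hNdef] at this; linarith
  obtain ⟨C, ρ₁, hC0, hC⟩ := cauchy_decay hδ hm N (hdec N) k
  set P : ℝ := max ρ₁ 0 with hPdef
  have hP0 : 0 ≤ P := le_max_right _ _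
  have hcont : Continuous (fun ρ : ℝ => iteratedDeriv k m ((β : ℂ) + (ρ : ℂ) * I)) := by
    rw [continuous_iff_continuousAt]
    intro ρ
    have h1 : ContinuousAt (iteratedDeriv k m) ((β : ℂ) + (ρ : ℂ) * I) :=
      ((hAk _ (hline ρ)).differentiableAt).continuousAt
    have h2 : Continuous (fun ρ : ℝ => (β : ℂ) + (ρ : ℂ) * I) := by continuity
    exact ContinuousAt.comp (f := fun ρ : ℝ => (β:ℂ) + (ρ:ℂ) * I) h1 h2.continuousAt
  obtain ⟨M, hM⟩ := (isCompact_Icc (a := -P) (b := P)).exists_bound_of_continuousOn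
    hcont.continuousOn
  set c₀ : ℝ := min 1 ((1 + P) ^ e) with hc₀def
  have hc₀ : 0 < c₀ := lt_min one_pos (Real.rpow_pos_of_pos (by linarith) e)
  have hlow : ∀ ρ : ℝ, |ρ| ≤ P → c₀ ≤ (1 + |ρ|) ^ e := by
    intro ρ hρ
    rcases le_or_gt 0 e with he | he
    · calc c₀ ≤ 1 := min_le_left _ _
        _ ≤ (1 + |ρ|) ^ e := Real.one_le_rpow (by linarith [abs_nonneg ρ]) he
    · calc c₀ ≤ (1 + P) ^ e := min_le_right _ _
        _ ≤ (1 + |ρ|) ^ e := Real.rpow_le_rpow_of_nonpos (by linarith [abs_nonneg ρ])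
            (by linarith) he.le
  set M' : ℝ := max M 0 with hM'def
  refine ⟨max C (M' / c₀), fun ρ => ?_⟩
  have hrpow_pos : (0:ℝ) < (1 + |ρ|) ^ e := Real.rpow_pos_of_pos (by linarith [abs_nonneg ρ]) e
  rcases le_or_gt |ρ| P with hρ | hρ
  · have h1 : ‖iteratedDeriv k m ((β : ℂ) + (ρ : ℂ) * I)‖ ≤ M' := by
      refine le_trans (hM ρ ?_) (le_max_left _ _)
      constructor <;> [linarith [neg_abs_le ρ]; linarith [le_abs_self ρ]]
    calc ‖iteratedDeriv k m ((β : ℂ) + (ρ : ℂ) * I)‖ ≤ M' := h1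
      _ = (M' / c₀) * c₀ := by field_simp
      _ ≤ (M' / c₀) * (1 + |ρ|) ^ e := by
          apply mul_le_mul_of_nonneg_left (hlow ρ hρ)
          positivity
      _ ≤ max C (M' / c₀) * (1 + |ρ|) ^ e := by
          apply mul_le_mul_of_nonneg_right (le_max_right _ _) hrpow_pos.le
  · have hz : ρ₁ ≤ |((β : ℂ) + (ρ : ℂ) * I).im| := by
      have : ρ₁ ≤ P := le_max_left _ _
      simp; linarith
    have hre : |((β : ℂ) + (ρ : ℂ) * I).re - β| ≤ δ / 2 ^ (k + 1) := by
      simp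
      positivity
    have := hC _ hre hz
    have him : ((β : ℂ) + (ρ : ℂ) * I).im = ρ := by simp
    rw [him] at this
    calc ‖iteratedDeriv k m ((β : ℂ) + (ρ : ℂ) * I)‖ ≤ C * (1 + |ρ|) ^ (-(N:ℝ)) := this
      _ ≤ C * (1 + |ρ|) ^ e := by
          apply mul_le_mul_of_nonneg_left
            (Real.rpow_le_rpow_of_exponent_le (by linarith [abs_nonneg ρ]) hNe) hC0
      _ ≤ max C (M' / c₀) * (1 + |ρ|) ^ e :=
          mul_le_mul_of_nonneg_right (le_max_left _ _) hrpow_pos.le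

lemma iteratedDeriv_add_of_analytic {f g : ℂ → ℂ} {U : Set ℂ} (hU : IsOpen U)
    (hf : DifferentiableOn ℂ f U) (hg : DifferentiableOn ℂ g U) (k : ℕ) :
    ∀ z ∈ U, iteratedDeriv k (fun w => f w + g w) z
      = iteratedDeriv k f z + iteratedDeriv k g z := by
  have hAf : AnalyticOnNhd ℂ f U := hf.analyticOnNhd hU
  have hAg : AnalyticOnNhd ℂ g U := hg.analyticOnNhd hU
  have hAfk : ∀ j, AnalyticOnNhd ℂ (iteratedDeriv j f) U := fun j => by
    rw [iteratedDeriv_eq_iterate]; exact hAf.iterated_deriv j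
  have hAgk : ∀ j, AnalyticOnNhd ℂ (iteratedDeriv j g) U := fun j => by
    rw [iteratedDeriv_eq_iterate]; exact hAg.iterated_deriv j
  induction k with
  | zero => intro z _; simp
  | succ k ih =>
    intro z hz
    rw [iteratedDeriv_succ, iteratedDeriv_succ, iteratedDeriv_succ]
    have hev : iteratedDeriv k (fun w => f w + g w)
        =ᶠ[nhds z] fun w => iteratedDeriv k f w + iteratedDeriv k g w := by
      filter_upwards [hU.mem_nhds hz] with w hw using ih w hw
    rw [hev.deriv_eq]
    exact deriv_add ((hAfk k z hz).differentiableAt) ((hAgk k z hz).differentiableAt)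

end Aux

/-- Order improvement (scalar version of Remark 1.3): if `f ∈ M^μ_R` and a
line `Γ_β` avoids `R` and the restriction of `f` to `Γ_β` is a symbol of
order `μ-1`, then `f ∈ M^{μ-1}_R`. -/
theorem mellin_symbol_order_improvement
    (μ : ℝ) (R : Set ℂ) (hR : IsMellinAsymType R) (f : ℂ → ℂ)
    (hf : MellinClass μ R f) (β : ℝ) (hβ : ∀ z : ℂ, z.re = β → z ∉ R)
    (hres : IsSymbol (μ - 1) (fun ρ : ℝ => f ((β : ℂ) + ρ * Complex.I))) :
    MellinClass (μ - 1) R f := by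
  obtain ⟨h, m, hhol, hsm, hdecomp⟩ := hf
  obtain ⟨δ, hδ0, hδ1, hδ⟩ := strip_avoid hR β hβ
  have hUopen : IsOpen {z : ℂ | |z.re - β| < δ} := strip_open β δ
  have hmU : DifferentiableOn ℂ m {z : ℂ | |z.re - β| < δ} :=
    hsm.1.mono (fun z hz => hδ z hz)
  have hlineU : ∀ t : ℝ, ((β:ℂ) + (t:ℂ)*I) ∈ {z : ℂ | |z.re - β| < δ} := by
    intro t; simp [hδ0]
  have hh : Differentiable ℂ h := hhol.1
  have hres_h : ∀ (c : ℝ) (k : ℕ) (ρ : ℝ),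
      iteratedDeriv k (fun t : ℝ => h ((c:ℂ) + (t:ℂ)*I)) ρ
        = I^k * iteratedDeriv k h ((c:ℂ) + (ρ:ℂ)*I) := fun c k =>
    restrict_iteratedDeriv isOpen_univ hh.differentiableOn _ (fun _ => Set.mem_univ _) k
  -- decay hypothesis in strip form
  have hdec : ∀ N : ℕ, ∃ C ρ₀ : ℝ, 0 ≤ C ∧ ∀ z : ℂ, |z.re - β| ≤ δ/2 → ρ₀ ≤ |z.im| →
      ‖m z‖ ≤ C * (1+|z.im|)^(-(N:ℝ)) := by
    intro N
    obtain ⟨C, ρ₀, hC⟩ := hsm.2.2 (β - δ/2) (β + δ/2) N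
    refine ⟨max C 0, ρ₀, le_max_right _ _, fun z hz hρ => ?_⟩
    have hmem : z.re ∈ Set.Icc (β - δ/2) (β + δ/2) := by
      constructor <;> [linarith [abs_le.mp hz |>.1]; linarith [abs_le.mp hz |>.2]]
    have hb := hC z.re hmem z.im hρ
    rw [Complex.re_add_im] at hb
    calc ‖m z‖ ≤ C * (1+|z.im|)^(-(N:ℝ)) := hb
      _ ≤ max C 0 * (1+|z.im|)^(-(N:ℝ)) := by
          apply mul_le_mul_of_nonneg_right (le_max_left _ _)
          positivity
  refine ⟨h, m, ⟨hh, ?_⟩, hsm, hdecomp⟩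
  intro a b k
  set a' : ℝ := min a β with ha'
  set b' : ℝ := max b β with hb'
  have hab : a' ≤ b' := le_trans (min_le_right _ _) (le_max_right _ _)
  -- bound on the (k+1)-st derivative of h in the strip, with improved exponent form
  obtain ⟨C₁, hC₁⟩ := hhol.2 a' b' (k+1)
  set C₁' : ℝ := max C₁ 0 with hC₁'def
  have hC₁'nn : 0 ≤ C₁' := le_max_right _ _
  have hC₁' : ∀ σ ∈ Set.Icc a' b', ∀ ρ : ℝ,
      ‖iteratedDeriv (k+1) h ((σ:ℂ)+(ρ:ℂ)*I)‖ ≤ C₁' * (1+|ρ|)^(μ-1-(k:ℝ)) := by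
    intro σ hσ ρ
    have hb := hC₁ σ hσ ρ
    rw [hres_h σ (k+1) ρ] at hb
    have hnorm : ‖(I:ℂ)^(k+1) * iteratedDeriv (k+1) h ((σ:ℂ)+(ρ:ℂ)*I)‖
        = ‖iteratedDeriv (k+1) h ((σ:ℂ)+(ρ:ℂ)*I)‖ := by
      rw [norm_mul, norm_pow]; simp
    rw [hnorm] at hb
    have hexp : μ - ((k+1 : ℕ):ℝ) = μ - 1 - (k:ℝ) := by push_cast; ring
    rw [hexp] at hb
    calc ‖iteratedDeriv (k+1) h ((σ:ℂ)+(ρ:ℂ)*I)‖ ≤ C₁ * (1+|ρ|)^(μ-1-(k:ℝ)) := hb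
      _ ≤ C₁' * (1+|ρ|)^(μ-1-(k:ℝ)) := by
          apply mul_le_mul_of_nonneg_right (le_max_left _ _)
          positivity
  -- bound on the k-th derivative of h on the line Γ_β
  obtain ⟨Cf, hCf⟩ := hres.2 k
  obtain ⟨Cm, hCm⟩ := m_line_bound hδ0 hmU hdec k (μ-1-(k:ℝ))
  have hkey : ∀ ρ : ℝ, iteratedDeriv k (fun t : ℝ => f ((β:ℂ) + (t:ℂ)*I)) ρ
      = I^k * (iteratedDeriv k h ((β:ℂ)+(ρ:ℂ)*I) + iteratedDeriv k m ((β:ℂ)+(ρ:ℂ)*I)) := by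
    intro ρ
    have hfun : (fun t : ℝ => f ((β:ℂ) + (t:ℂ)*I))
        = fun t : ℝ => (fun w => h w + m w) ((β:ℂ) + (t:ℂ)*I) := by
      funext t
      exact hdecomp _ (hδ _ (by simp [hδ0]))
    rw [hfun, restrict_iteratedDeriv (g := fun w => h w + m w) hUopen (hh.differentiableOn.add hmU) (β:ℂ) hlineU k ρ,
      iteratedDeriv_add_of_analytic hUopen hh.differentiableOn hmU k _ (hlineU ρ)]
  have hCβ : ∀ ρ : ℝ, ‖iteratedDeriv k h ((β:ℂ)+(ρ:ℂ)*I)‖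
      ≤ (Cf + Cm) * (1+|ρ|)^(μ-1-(k:ℝ)) := by
    intro ρ
    have h1 := hCf ρ
    rw [hkey ρ] at h1
    have hnorm : ‖(I:ℂ)^k * (iteratedDeriv k h ((β:ℂ)+(ρ:ℂ)*I)
        + iteratedDeriv k m ((β:ℂ)+(ρ:ℂ)*I))‖
        = ‖iteratedDeriv k h ((β:ℂ)+(ρ:ℂ)*I) + iteratedDeriv k m ((β:ℂ)+(ρ:ℂ)*I)‖ := by
      rw [norm_mul, norm_pow]; simp
    rw [hnorm] at h1
    calc ‖iteratedDeriv k h ((β:ℂ)+(ρ:ℂ)*I)‖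
        = ‖(iteratedDeriv k h ((β:ℂ)+(ρ:ℂ)*I) + iteratedDeriv k m ((β:ℂ)+(ρ:ℂ)*I))
            - iteratedDeriv k m ((β:ℂ)+(ρ:ℂ)*I)‖ := by ring_nf
      _ ≤ ‖iteratedDeriv k h ((β:ℂ)+(ρ:ℂ)*I) + iteratedDeriv k m ((β:ℂ)+(ρ:ℂ)*I)‖
            + ‖iteratedDeriv k m ((β:ℂ)+(ρ:ℂ)*I)‖ := norm_sub_le _ _
      _ ≤ Cf * (1+|ρ|)^(μ-1-(k:ℝ)) + Cm * (1+|ρ|)^(μ-1-(k:ℝ)) := add_le_add h1 (hCm ρ)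
      _ = (Cf + Cm) * (1+|ρ|)^(μ-1-(k:ℝ)) := by ring
  -- main estimate via the mean value inequality in the horizontal direction
  refine ⟨Cf + Cm + C₁' * (b' - a'), fun β' hβ' ρ => ?_⟩
  rw [hres_h β' k ρ]
  have hnorm : ‖(I:ℂ)^k * iteratedDeriv k h ((β':ℂ)+(ρ:ℂ)*I)‖
      = ‖iteratedDeriv k h ((β':ℂ)+(ρ:ℂ)*I)‖ := by
    rw [norm_mul, norm_pow]; simp
  rw [hnorm]
  have hβ'mem : β' ∈ Set.Icc a' b' :=
    ⟨le_trans (min_le_left _ _) hβ'.1, le_trans hβ'.2 (le_max_left _ _)⟩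
  have hβmem : β ∈ Set.Icc a' b' := ⟨min_le_right _ _, le_max_right _ _⟩
  have hderiv : ∀ σ ∈ Set.Icc a' b',
      HasDerivWithinAt (fun σ : ℝ => iteratedDeriv k h ((σ:ℂ)+(ρ:ℂ)*I))
        (iteratedDeriv (k+1) h ((σ:ℂ)+(ρ:ℂ)*I)) (Set.Icc a' b') σ := by
    intro σ hσ
    have hA : AnalyticOnNhd ℂ h Set.univ := hh.differentiableOn.analyticOnNhd isOpen_univ
    have hDk : Differentiable ℂ (iteratedDeriv k h) := by
      rw [iteratedDeriv_eq_iterate]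
      exact differentiableOn_univ.mp ((hA.iterated_deriv k).differentiableOn)
    have hd : HasDerivAt (iteratedDeriv k h)
        (iteratedDeriv (k+1) h ((σ:ℂ)+(ρ:ℂ)*I)) ((σ:ℂ)+(ρ:ℂ)*I) := by
      rw [iteratedDeriv_succ]
      exact (hDk _).hasDerivAt
    have hl : HasDerivAt (fun s : ℝ => (s:ℂ) + (ρ:ℂ)*I) 1 σ := by
      have h0 : HasDerivAt (fun s : ℝ => (s:ℂ)) 1 σ := by
        simpa using (hasDerivAt_id σ).ofReal_comp
      simpa using h0.add_const ((ρ:ℂ)*I)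
    have hcomp := hd.scomp σ hl
    simp only [one_smul] at hcomp
    exact hcomp.hasDerivWithinAt
  have hbd : ∀ σ ∈ Set.Icc a' b', ‖iteratedDeriv (k+1) h ((σ:ℂ)+(ρ:ℂ)*I)‖
      ≤ C₁' * (1+|ρ|)^(μ-1-(k:ℝ)) := fun σ hσ => hC₁' σ hσ ρ
  have hmvt := Convex.norm_image_sub_le_of_norm_hasDerivWithin_le hderiv hbd
    (convex_Icc a' b') hβmem hβ'mem
  have hdist : ‖β' - β‖ ≤ b' - a' := by
    rw [Real.norm_eq_abs, abs_sub_le_iff]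
    constructor <;> linarith [hβ'mem.1, hβ'mem.2, hβmem.1, hβmem.2]
  have hrp : (0:ℝ) ≤ (1+|ρ|)^(μ-1-(k:ℝ)) := Real.rpow_nonneg (by linarith [abs_nonneg ρ]) _
  have hstep : ‖iteratedDeriv k h ((β':ℂ)+(ρ:ℂ)*I) - iteratedDeriv k h ((β:ℂ)+(ρ:ℂ)*I)‖
      ≤ C₁' * (1+|ρ|)^(μ-1-(k:ℝ)) * (b' - a') := le_trans hmvt
      (mul_le_mul_of_nonneg_left hdist (mul_nonneg hC₁'nn hrp))
  calc ‖iteratedDeriv k h ((β':ℂ)+(ρ:ℂ)*I)‖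
      ≤ ‖iteratedDeriv k h ((β:ℂ)+(ρ:ℂ)*I)‖
        + ‖iteratedDeriv k h ((β':ℂ)+(ρ:ℂ)*I) - iteratedDeriv k h ((β:ℂ)+(ρ:ℂ)*I)‖ := by
        have := norm_add_le (iteratedDeriv k h ((β:ℂ)+(ρ:ℂ)*I))
          (iteratedDeriv k h ((β':ℂ)+(ρ:ℂ)*I) - iteratedDeriv k h ((β:ℂ)+(ρ:ℂ)*I))
        simpa using this
    _ ≤ (Cf+Cm)*(1+|ρ|)^(μ-1-(k:ℝ)) + C₁'*(1+|ρ|)^(μ-1-(k:ℝ))*(b'-a') :=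
        add_le_add (hCβ ρ) hstep
    _ = (Cf + Cm + C₁'*(b'-a')) * (1+|ρ|)^(μ-1-(k:ℝ)) := by ring
end

section
/- Composition of Fuchs-type differential operators and the Mellin translation product (Remark 1.8 in the differential, scalar-coefficient case): let A and B be Fuchs-type differential operators of orders μ and ν respectively, with coefficients a_j, b_k ∈ C^∞([0,∞), ℂ). Then (i) the composition AB is a Fuchs-type operator of order μ+ν: there exist c_l ∈ C^∞([0,∞), ℂ), 0 ≤ l ≤ μ+ν, with (A(Bu))(r) = r^{−(μ+ν)} Σ_{l=0}^{μ+ν} c_l(r) ((−r d/dr)^l u)(r) for all u ∈ C^∞((0,∞), ℂ) and r > 0; and (ii) for every l ∈ ℕ the conormal symbols satisfy the Mellin translation product σ^{μ+ν−l}(AB)(z) = Σ_{i+j=l} σ^{μ−i}(A)(z+ν−j) · σ^{ν−j}(B)(z) for all z ∈ ℂ, where σ^{μ−i}(A)(z) := (1/i!) Σ_{j=0}^{μ} (∂_r^i a_j)(0) z^j, σ^{ν−j}(B)(z) := (1/j!) Σ_{k=0}^{ν} (∂_r^j b_k)(0) z^k, and σ^{μ+ν−l}(AB)(z) := (1/l!)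 Σ_{m=0}^{μ+ν} (∂_r^l c_m)(0) z^m. -/
open Complex Finset

/-- The Fuchs derivative `(-r d/dr)`. -/
noncomputable def fuchsD (v : ℝ → ℂ) : ℝ → ℂ :=
  fun r => -(r : ℂ) * deriv v r

/-- The Fuchs-type differential operator
`A u (r) = r^{-μ} Σ_{j=0}^{μ} a_j(r) ((-r d/dr)^j u)(r)`. -/
noncomputable def fuchsOp (μ : ℕ) (a : ℕ → ℝ → ℂ) (u : ℝ → ℂ) (r : ℝ) : ℂ :=
  (r : ℂ) ^ (-(μ : ℤ)) * ∑ j ∈ range (μ + 1), a j r * (fuchsD^[j] u) r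

/-- The `i`-th conormal symbol
`σ^{μ-i}(A)(z) = (1/i!) Σ_{j=0}^{μ} (∂_r^i a_j)(0) z^j`, with derivatives of
the coefficients taken at `0` from within `[0,∞)`. -/
noncomputable def conormalSymbol (μ : ℕ) (a : ℕ → ℝ → ℂ) (i : ℕ) (z : ℂ) : ℂ :=
  (1 / (i.factorial : ℂ)) *
    ∑ j ∈ range (μ + 1), iteratedDerivWithin i (a j) (Set.Ici 0) 0 * z ^ j


namespace FuchsAux

open Set Function Topology

/-- within-version of the Fuchs derivative -/
noncomputable def fuchsDW (f : ℝ → ℂ) : ℝ → ℂ :=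
  fun r => -(r : ℂ) * derivWithin f (Set.Ici 0) r

/-- shifted Fuchs derivative -/
noncomputable def fuchsE (ν : ℕ) (w : ℝ → ℂ) : ℝ → ℂ :=
  fun r => fuchsD w r + (ν : ℂ) * w r

lemma contDiffOn_negOfReal (s : Set ℝ) : ContDiffOn ℝ (⊤ : ℕ∞) (fun r : ℝ => -(r : ℂ)) s := by
  have : ContDiff ℝ (⊤ : ℕ∞) (fun r : ℝ => (r : ℂ)) := Complex.ofRealCLM.contDiff
  exact this.neg.contDiffOn

lemma fuchsDW_contDiffOn {f : ℝ → ℂ} (hf : ContDiffOn ℝ (⊤ : ℕ∞) f (Set.Ici 0)) :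
    ContDiffOn ℝ (⊤ : ℕ∞) (fuchsDW f) (Set.Ici 0) :=
  (contDiffOn_negOfReal _).mul (hf.derivWithin (uniqueDiffOn_Ici 0) (by simp))

lemma fuchsDW_iter_contDiffOn {f : ℝ → ℂ} (hf : ContDiffOn ℝ (⊤ : ℕ∞) f (Set.Ici 0)) (p : ℕ) :
    ContDiffOn ℝ (⊤ : ℕ∞) (fuchsDW^[p] f) (Set.Ici 0) := by
  induction p with
  | zero => simpa using hf
  | succ p ih => rw [Function.iterate_succ_apply']; exact fuchsDW_contDiffOn ih

lemma fuchsD_contDiffOn_Ioi {f : ℝ → ℂ} (hf : ContDiffOn ℝ (⊤ : ℕ∞) f (Set.Ioi 0)) :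
    ContDiffOn ℝ (⊤ : ℕ∞) (fuchsD f) (Set.Ioi 0) :=
  (contDiffOn_negOfReal _).mul (hf.deriv_of_isOpen isOpen_Ioi (by simp))

lemma fuchsD_iter_contDiffOn_Ioi {f : ℝ → ℂ} (hf : ContDiffOn ℝ (⊤ : ℕ∞) f (Set.Ioi 0)) (p : ℕ) :
    ContDiffOn ℝ (⊤ : ℕ∞) (fuchsD^[p] f) (Set.Ioi 0) := by
  induction p with
  | zero => simpa using hf
  | succ p ih => rw [Function.iterate_succ_apply']; exact fuchsD_contDiffOn_Ioi ih

lemma fuchsE_contDiffOn_Ioi {ν : ℕ} {f : ℝ → ℂ} (hf : ContDiffOn ℝ (⊤ : ℕ∞) f (Set.Ioi 0)) :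
    ContDiffOn ℝ (⊤ : ℕ∞) (fuchsE ν f) (Set.Ioi 0) :=
  (fuchsD_contDiffOn_Ioi hf).add (contDiffOn_const.mul hf)

lemma fuchsE_iter_contDiffOn_Ioi {ν : ℕ} {f : ℝ → ℂ} (hf : ContDiffOn ℝ (⊤ : ℕ∞) f (Set.Ioi 0)) (p : ℕ) :
    ContDiffOn ℝ (⊤ : ℕ∞) ((fuchsE ν)^[p] f) (Set.Ioi 0) := by
  induction p with
  | zero => simpa using hf
  | succ p ih => rw [Function.iterate_succ_apply']; exact fuchsE_contDiffOn_Ioi ih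

lemma diffAt_of_contDiffOn_Ioi {f : ℝ → ℂ} (hf : ContDiffOn ℝ (⊤ : ℕ∞) f (Set.Ioi 0)) {r : ℝ}
    (hr : r ∈ Set.Ioi (0:ℝ)) : DifferentiableAt ℝ f r :=
  (hf.differentiableOn (by simp)).differentiableAt (isOpen_Ioi.mem_nhds hr)

lemma fuchsD_eqOn {f g : ℝ → ℂ} (h : Set.EqOn f g (Set.Ioi 0)) :
    Set.EqOn (fuchsD f) (fuchsD g) (Set.Ioi 0) := by
  intro r hr
  have hev : f =ᶠ[𝓝 r] g := by
    filter_upwards [isOpen_Ioi.mem_nhds hr] with x hx using h hx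
  simp only [fuchsD, hev.deriv_eq]

lemma fuchsD_iter_eqOn {f g : ℝ → ℂ} (h : Set.EqOn f g (Set.Ioi 0)) (n : ℕ) :
    Set.EqOn (fuchsD^[n] f) (fuchsD^[n] g) (Set.Ioi 0) := by
  induction n with
  | zero => simpa using h
  | succ n ih =>
      rw [Function.iterate_succ_apply', Function.iterate_succ_apply']
      exact fuchsD_eqOn ih

lemma fuchsE_eqOn {ν : ℕ} {f g : ℝ → ℂ} (h : Set.EqOn f g (Set.Ioi 0)) :
    Set.EqOn (fuchsE ν f) (fuchsE ν g) (Set.Ioi 0) := by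
  intro r hr
  simp only [fuchsE, fuchsD_eqOn h hr, h hr]

lemma fuchsE_iter_eqOn {ν : ℕ} {f g : ℝ → ℂ} (h : Set.EqOn f g (Set.Ioi 0)) (n : ℕ) :
    Set.EqOn ((fuchsE ν)^[n] f) ((fuchsE ν)^[n] g) (Set.Ioi 0) := by
  induction n with
  | zero => simpa using h
  | succ n ih =>
      rw [Function.iterate_succ_apply', Function.iterate_succ_apply']
      exact fuchsE_eqOn ih


lemma pascal_merge (n : ℕ) (F : ℕ → ℕ → ℂ) :
    (∑ p ∈ range (n+1), (n.choose p : ℂ) * F (p+1) (n-p))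
      + ∑ p ∈ range (n+1), (n.choose p : ℂ) * F p (n-p+1)
    = ∑ p ∈ range (n+2), ((n+1).choose p : ℂ) * F p (n+1-p) := by
  have h1 : ∑ p ∈ range (n+2), ((n+1).choose p : ℂ) * F p (n+1-p)
      = (∑ p ∈ range (n+1), ((n+1).choose (p+1) : ℂ) * F (p+1) (n-p)) + F 0 (n+1) := by
    rw [Finset.sum_range_succ' (fun p => ((n+1).choose p : ℂ) * F p (n+1-p)) (n+1)]
    simp [Nat.succ_sub_succ]
  have h2 : ∑ p ∈ range (n+1), (n.choose p : ℂ) * F p (n-p+1)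
      = (∑ p ∈ range n, (n.choose (p+1) : ℂ) * F (p+1) (n-p)) + F 0 (n+1) := by
    rw [Finset.sum_range_succ' (fun p => (n.choose p : ℂ) * F p (n-p+1)) n]
    congr 1
    · refine Finset.sum_congr rfl fun p hp => ?_
      have : n - (p+1) + 1 = n - p := by
        have := Finset.mem_range.mp hp; omega
      rw [this]
    · simp
  have h3 : ∑ p ∈ range (n+1), (n.choose (p+1) : ℂ) * F (p+1) (n-p)
      = ∑ p ∈ range n, (n.choose (p+1) : ℂ) * F (p+1) (n-p) := by
    rw [Finset.sum_range_succ]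
    simp [Nat.choose_succ_self]
  rw [h1, h2]
  have h4 : ∀ p ∈ range (n+1), ((n+1).choose (p+1) : ℂ) * F (p+1) (n-p)
      = (n.choose p : ℂ) * F (p+1) (n-p) + (n.choose (p+1) : ℂ) * F (p+1) (n-p) := by
    intro p _
    rw [Nat.choose_succ_succ]
    push_cast
    ring
  rw [Finset.sum_congr rfl h4, Finset.sum_add_distrib, h3]
  ring

lemma fuchsD_add_pt {f g : ℝ → ℂ} {r : ℝ} (hf : DifferentiableAt ℝ f r)
    (hg : DifferentiableAt ℝ g r) :
    fuchsD (fun s => f s + g s) r = fuchsD f r + fuchsD g r := by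
  simp only [fuchsD, deriv_fun_add hf hg]; ring

lemma fuchsD_const_mul_pt {f : ℝ → ℂ} {c : ℂ} {r : ℝ} (hf : DifferentiableAt ℝ f r) :
    fuchsD (fun s => c * f s) r = c * fuchsD f r := by
  simp only [fuchsD, deriv_const_mul c hf]; ring

lemma fuchsD_mul_pt {f g : ℝ → ℂ} {r : ℝ} (hf : DifferentiableAt ℝ f r)
    (hg : DifferentiableAt ℝ g r) :
    fuchsD (fun s => f s * g s) r = fuchsD f r * g r + f r * fuchsD g r := by
  simp only [fuchsD, deriv_fun_mul hf hg]; ring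


section iterlin
open Set Function Topology

lemma fuchsD_iter_add {f g : ℝ → ℂ} (hf : ContDiffOn ℝ (⊤ : ℕ∞) f (Set.Ioi 0))
    (hg : ContDiffOn ℝ (⊤ : ℕ∞) g (Set.Ioi 0)) (n : ℕ) :
    ∀ r ∈ Set.Ioi (0:ℝ), fuchsD^[n] (fun s => f s + g s) r = fuchsD^[n] f r + fuchsD^[n] g r := by
  induction n with
  | zero => intro r _; simp
  | succ n ih =>
      intro r hr
      rw [Function.iterate_succ_apply', Function.iterate_succ_apply',
        Function.iterate_succ_apply']
      have h1 : Set.EqOn (fuchsD^[n] (fun s => f s + g s))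
          (fun s => fuchsD^[n] f s + fuchsD^[n] g s) (Set.Ioi 0) := fun s hs => ih s hs
      rw [fuchsD_eqOn h1 hr]
      exact fuchsD_add_pt
        (diffAt_of_contDiffOn_Ioi (fuchsD_iter_contDiffOn_Ioi hf n) hr)
        (diffAt_of_contDiffOn_Ioi (fuchsD_iter_contDiffOn_Ioi hg n) hr)

lemma fuchsD_iter_const_mul {f : ℝ → ℂ} (hf : ContDiffOn ℝ (⊤ : ℕ∞) f (Set.Ioi 0)) (c : ℂ) (n : ℕ) :
    ∀ r ∈ Set.Ioi (0:ℝ), fuchsD^[n] (fun s => c * f s) r = c * fuchsD^[n] f r := by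
  induction n with
  | zero => intro r _; simp
  | succ n ih =>
      intro r hr
      rw [Function.iterate_succ_apply', Function.iterate_succ_apply']
      have h1 : Set.EqOn (fuchsD^[n] (fun s => c * f s))
          (fun s => c * fuchsD^[n] f s) (Set.Ioi 0) := fun s hs => ih s hs
      rw [fuchsD_eqOn h1 hr]
      exact fuchsD_const_mul_pt (diffAt_of_contDiffOn_Ioi (fuchsD_iter_contDiffOn_Ioi hf n) hr)

lemma fuchsE_add_pt {ν : ℕ} {f g : ℝ → ℂ} {r : ℝ} (hf : DifferentiableAt ℝ f r)
    (hg : DifferentiableAt ℝ g r) :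
    fuchsE ν (fun s => f s + g s) r = fuchsE ν f r + fuchsE ν g r := by
  simp only [fuchsE, fuchsD_add_pt hf hg]; ring

lemma fuchsE_iter_add {ν : ℕ} {f g : ℝ → ℂ} (hf : ContDiffOn ℝ (⊤ : ℕ∞) f (Set.Ioi 0))
    (hg : ContDiffOn ℝ (⊤ : ℕ∞) g (Set.Ioi 0)) (n : ℕ) :
    ∀ r ∈ Set.Ioi (0:ℝ),
      (fuchsE ν)^[n] (fun s => f s + g s) r = (fuchsE ν)^[n] f r + (fuchsE ν)^[n] g r := by
  induction n with
  | zero => intro r _; simp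
  | succ n ih =>
      intro r hr
      rw [Function.iterate_succ_apply', Function.iterate_succ_apply',
        Function.iterate_succ_apply']
      have h1 : Set.EqOn ((fuchsE ν)^[n] (fun s => f s + g s))
          (fun s => (fuchsE ν)^[n] f s + (fuchsE ν)^[n] g s) (Set.Ioi 0) := fun s hs => ih s hs
      rw [fuchsE_eqOn h1 hr]
      exact fuchsE_add_pt
        (diffAt_of_contDiffOn_Ioi (fuchsE_iter_contDiffOn_Ioi hf n) hr)
        (diffAt_of_contDiffOn_Ioi (fuchsE_iter_contDiffOn_Ioi hg n) hr)

lemma fuchsE_iter_sum {ν : ℕ} {ι : Type*} (t : Finset ι) (f : ι → ℝ → ℂ)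
    (hf : ∀ i ∈ t, ContDiffOn ℝ (⊤ : ℕ∞) (f i) (Set.Ioi 0)) (n : ℕ) :
    ∀ r ∈ Set.Ioi (0:ℝ),
      (fuchsE ν)^[n] (fun s => ∑ i ∈ t, f i s) r = ∑ i ∈ t, (fuchsE ν)^[n] (f i) r := by
  classical
  induction t using Finset.induction with
  | empty =>
      intro r hr
      have h0 : Set.EqOn (fun _ : ℝ => (0:ℂ)) (fun s => (0:ℂ) * (0:ℂ)) (Set.Ioi 0) := by
        intro s _; simp
      simp only [Finset.sum_empty]
      have := fuchsD_iter_const_mul (f := fun _ => (0:ℂ)) contDiffOn_const (0:ℂ)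
      -- easier: (fuchsE ν)^[n] 0 = 0 pointwise via const-mul trick
      have hz : ∀ m, ∀ s ∈ Set.Ioi (0:ℝ), (fuchsE ν)^[m] (fun _ => (0:ℂ)) s = 0 := by
        intro m
        induction m with
        | zero => intro s _; simp
        | succ m ihm =>
            intro s hs
            rw [Function.iterate_succ_apply']
            have h1 : Set.EqOn ((fuchsE ν)^[m] (fun _ => (0:ℂ))) (fun _ => (0:ℂ))
              (Set.Ioi 0) := fun x hx => ihm x hx
            rw [fuchsE_eqOn h1 hs]
            simp [fuchsE, fuchsD]
      exact hz n r hr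
  | insert x t' hx ih =>
      intro r hr
      have hsum : Set.EqOn (fun s => ∑ i ∈ insert x t', f i s)
          (fun s => f x s + ∑ i ∈ t', f i s) (Set.Ioi 0) := by
        intro s _; simp [Finset.sum_insert hx]
      rw [fuchsE_iter_eqOn hsum n hr,
        fuchsE_iter_add (hf x (Finset.mem_insert_self x t'))
          (ContDiffOn.sum fun i hi => hf i (Finset.mem_insert_of_mem hi)) n r hr,
        Finset.sum_insert hx]
      congr 1
      exact ih (fun i hi => hf i (Finset.mem_insert_of_mem hi)) r hr

end iterlin

section mainops
open Set Function Topology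

lemma fuchsE_iter_leibniz (ν : ℕ) (n : ℕ) :
    ∀ f g : ℝ → ℂ, ContDiffOn ℝ (⊤ : ℕ∞) f (Set.Ioi 0) → ContDiffOn ℝ (⊤ : ℕ∞) g (Set.Ioi 0) →
    ∀ r ∈ Set.Ioi (0:ℝ),
      (fuchsE ν)^[n] (fun s => f s * g s) r
        = ∑ p ∈ range (n+1), (n.choose p : ℂ) * (fuchsD^[p] f r * (fuchsE ν)^[n-p] g r) := by
  induction n with
  | zero => intro f g _ _ r _; simp
  | succ n ih =>
      intro f g hf hg r hr
      rw [Function.iterate_succ_apply]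
      have key : Set.EqOn (fuchsE ν (fun s => f s * g s))
          (fun s => fuchsD f s * g s + f s * fuchsE ν g s) (Set.Ioi 0) := by
        intro s hs
        have h1 := fuchsD_mul_pt (diffAt_of_contDiffOn_Ioi hf hs)
          (diffAt_of_contDiffOn_Ioi hg hs)
        simp only [fuchsE, h1]
        ring
      rw [fuchsE_iter_eqOn key n hr,
        fuchsE_iter_add ((fuchsD_contDiffOn_Ioi hf).mul hg)
          (hf.mul (fuchsE_contDiffOn_Ioi hg)) n r hr,
        ih (fuchsD f) g (fuchsD_contDiffOn_Ioi hf) hg r hr,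
        ih f (fuchsE ν g) hf (fuchsE_contDiffOn_Ioi hg) r hr]
      have e1 : ∀ p, fuchsD^[p] (fuchsD f) r = fuchsD^[p+1] f r := by
        intro p; rw [Function.iterate_succ_apply]
      have e2 : ∀ p, (fuchsE ν)^[n-p] (fuchsE ν g) r = (fuchsE ν)^[n-p+1] g r := by
        intro p; rw [Function.iterate_succ_apply]
      simp only [e1, e2]
      exact pascal_merge n (fun p q => fuchsD^[p] f r * (fuchsE ν)^[q] g r)

lemma fuchsE_iter_binom (ν : ℕ) (n : ℕ) :
    ∀ v : ℝ → ℂ, ContDiffOn ℝ (⊤ : ℕ∞) v (Set.Ioi 0) → ∀ r ∈ Set.Ioi (0:ℝ),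
      (fuchsE ν)^[n] v r
        = ∑ q ∈ range (n+1), (n.choose q : ℂ) * ((ν:ℂ)^(n-q) * fuchsD^[q] v r) := by
  induction n with
  | zero => intro v _ r _; simp
  | succ n ih =>
      intro v hv r hr
      rw [Function.iterate_succ_apply, ih (fuchsE ν v) (fuchsE_contDiffOn_Ioi hv) r hr]
      have key : ∀ q ∈ range (n+1),
          (n.choose q : ℂ) * ((ν:ℂ)^(n-q) * fuchsD^[q] (fuchsE ν v) r)
          = (n.choose q : ℂ) * ((ν:ℂ)^(n-q) * fuchsD^[q+1] v r)
            + (n.choose q : ℂ) * ((ν:ℂ)^((n-q)+1) * fuchsD^[q] v r) := by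
        intro q _
        have hEon : Set.EqOn (fuchsE ν v)
            (fun s => fuchsD v s + (ν:ℂ) * v s) (Set.Ioi 0) := fun s _ => rfl
        have h1 : fuchsD^[q] (fuchsE ν v) r
            = fuchsD^[q] (fuchsD v) r + (ν:ℂ) * fuchsD^[q] v r := by
          rw [fuchsD_iter_eqOn hEon q hr]
          rw [fuchsD_iter_add (fuchsD_contDiffOn_Ioi hv) (contDiffOn_const.mul hv) q r hr]
          rw [fuchsD_iter_const_mul hv (ν:ℂ) q r hr]
        rw [h1, ← Function.iterate_succ_apply]
        ring
      rw [Finset.sum_congr rfl key, Finset.sum_add_distrib]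
      exact pascal_merge n (fun p q => (ν:ℂ)^q * fuchsD^[p] v r)

lemma conj_zpow_pt (ν : ℕ) {w : ℝ → ℂ} {r : ℝ} (hr : r ∈ Set.Ioi (0:ℝ))
    (hw : DifferentiableAt ℝ w r) :
    fuchsD (fun s => (s:ℂ) ^ (-(ν:ℤ)) * w s) r = (r:ℂ) ^ (-(ν:ℤ)) * fuchsE ν w r := by
  have hr0 : (0:ℝ) < r := hr
  have hrC : (r:ℂ) ≠ 0 := Complex.ofReal_ne_zero.mpr hr0.ne'
  have hphi := (hasDerivAt_zpow (-(ν:ℤ)) r (Or.inl hr0.ne')).ofReal_comp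
  rw [show (fun s : ℝ => ((s ^ (-(ν:ℤ)) : ℝ) : ℂ)) = (fun s : ℝ => (s:ℂ) ^ (-(ν:ℤ)))
    from funext fun s => Complex.ofReal_zpow s _] at hphi
  have hprod := hphi.mul hw.hasDerivAt
  simp only [fuchsE, fuchsD]
  rw [show (fun s : ℝ => (s:ℂ) ^ (-(ν:ℤ)) * w s) = (fun s : ℝ => (s:ℂ) ^ (-(ν:ℤ))) * w from rfl,
    hprod.deriv]
  push_cast
  have hz : ((r:ℂ) ^ (-(ν:ℤ) - 1)) * (r:ℂ) = (r:ℂ) ^ (-(ν:ℤ)) := by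
    rw [← zpow_add_one₀ hrC]; norm_num
  linear_combination ((ν:ℂ) * w r) * hz

lemma conj_zpow (ν : ℕ) (n : ℕ) :
    ∀ w : ℝ → ℂ, ContDiffOn ℝ (⊤ : ℕ∞) w (Set.Ioi 0) → ∀ r ∈ Set.Ioi (0:ℝ),
      fuchsD^[n] (fun s => (s:ℂ) ^ (-(ν:ℤ)) * w s) r
        = (r:ℂ) ^ (-(ν:ℤ)) * (fuchsE ν)^[n] w r := by
  induction n with
  | zero => intro w _ r _; simp
  | succ n ih =>
      intro w hw r hr
      rw [Function.iterate_succ_apply, Function.iterate_succ_apply]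
      have key : Set.EqOn (fuchsD (fun s => (s:ℂ) ^ (-(ν:ℤ)) * w s))
          (fun s => (s:ℂ) ^ (-(ν:ℤ)) * fuchsE ν w s) (Set.Ioi 0) := by
        intro s hs
        exact conj_zpow_pt ν hs (diffAt_of_contDiffOn_Ioi hw hs)
      rw [fuchsD_iter_eqOn key n hr]
      exact ih (fuchsE ν w) (fuchsE_contDiffOn_Ioi hw) r hr

lemma fuchsDW_iter_eq (f : ℝ → ℂ) (p : ℕ) :
    ∀ r ∈ Set.Ioi (0:ℝ), fuchsDW^[p] f r = fuchsD^[p] f r := by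
  induction p with
  | zero => intro r _; simp
  | succ p ih =>
      intro r hr
      rw [Function.iterate_succ_apply', Function.iterate_succ_apply']
      have h1 : fuchsDW^[p] f =ᶠ[𝓝 r] fuchsD^[p] f := by
        filter_upwards [isOpen_Ioi.mem_nhds hr] with x hx using ih x hx
      have h2 : derivWithin (fuchsDW^[p] f) (Set.Ici 0) r = deriv (fuchsDW^[p] f) r :=
        derivWithin_of_mem_nhds (Ici_mem_nhds hr)
      simp only [fuchsDW, fuchsD, h2, h1.deriv_eq]

end mainops

section taylor
open Set Function Topology

lemma iD_zero_fun (n : ℕ) {x : ℝ} (hx : x ∈ Set.Ici (0:ℝ)) :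
    iteratedDerivWithin n (fun _ : ℝ => (0:ℂ)) (Set.Ici 0) x = 0 := by
  have h := iteratedDerivWithin_const_smul (f := fun _ : ℝ => (0:ℂ)) (n := n)
    hx (uniqueDiffOn_Ici 0) (0:ℂ) contDiffWithinAt_const
  simpa using h

lemma iD_add {n : ℕ} {x : ℝ} (hx : x ∈ Set.Ici (0:ℝ)) {f g : ℝ → ℂ}
    (hf : ContDiffOn ℝ (⊤ : ℕ∞) f (Set.Ici 0)) (hg : ContDiffOn ℝ (⊤ : ℕ∞) g (Set.Ici 0)) :
    iteratedDerivWithin n (fun r => f r + g r) (Set.Ici 0) x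
      = iteratedDerivWithin n f (Set.Ici 0) x + iteratedDerivWithin n g (Set.Ici 0) x :=
  iteratedDerivWithin_add hx (uniqueDiffOn_Ici 0) ((hf x hx).of_le (by exact_mod_cast le_top)) ((hg x hx).of_le (by exact_mod_cast le_top))

lemma iD_const_mul {n : ℕ} {x : ℝ} (hx : x ∈ Set.Ici (0:ℝ)) (c : ℂ) {f : ℝ → ℂ}
    (hf : ContDiffOn ℝ (⊤ : ℕ∞) f (Set.Ici 0)) :
    iteratedDerivWithin n (fun r => c * f r) (Set.Ici 0) x
      = c * iteratedDerivWithin n f (Set.Ici 0) x := by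
  have h := iteratedDerivWithin_const_smul (f := f) (n := n) hx (uniqueDiffOn_Ici 0) c
    ((hf x hx).of_le (by exact_mod_cast le_top))
  simpa [smul_eq_mul] using h

lemma iD_sum {ι : Type*} (t : Finset ι) (f : ι → ℝ → ℂ)
    (hf : ∀ i ∈ t, ContDiffOn ℝ (⊤ : ℕ∞) (f i) (Set.Ici 0)) (n : ℕ) {x : ℝ}
    (hx : x ∈ Set.Ici (0:ℝ)) :
    iteratedDerivWithin n (fun r => ∑ i ∈ t, f i r) (Set.Ici 0) x
      = ∑ i ∈ t, iteratedDerivWithin n (f i) (Set.Ici 0) x := by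
  classical
  induction t using Finset.induction with
  | empty => simpa using iD_zero_fun n hx
  | insert i t' hm ih =>
      have h1 : (fun r => ∑ j ∈ insert i t', f j r)
          = fun r => f i r + ∑ j ∈ t', f j r := by
        funext r; rw [Finset.sum_insert hm]
      rw [h1, iD_add hx (hf i (Finset.mem_insert_self i t'))
        (ContDiffOn.sum fun j hj => hf j (Finset.mem_insert_of_mem hj)),
        Finset.sum_insert hm, ih (fun j hj => hf j (Finset.mem_insert_of_mem hj))]

lemma iD_mul (n : ℕ) :
    ∀ f g : ℝ → ℂ, ContDiffOn ℝ (⊤ : ℕ∞) f (Set.Ici 0) → ContDiffOn ℝ (⊤ : ℕ∞) g (Set.Ici 0) →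
    ∀ x ∈ Set.Ici (0:ℝ),
      iteratedDerivWithin n (fun r => f r * g r) (Set.Ici 0) x
        = ∑ i ∈ range (n+1), (n.choose i : ℂ) *
            (iteratedDerivWithin i f (Set.Ici 0) x * iteratedDerivWithin (n-i) g (Set.Ici 0) x) := by
  induction n with
  | zero => intro f g _ _ x _; simp
  | succ n ih =>
      intro f g hf hg x hx
      rw [iteratedDerivWithin_succ']
      have hDf : ContDiffOn ℝ (⊤ : ℕ∞) (derivWithin f (Set.Ici 0)) (Set.Ici 0) :=
        hf.derivWithin (uniqueDiffOn_Ici 0) (by simp)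
      have hDg : ContDiffOn ℝ (⊤ : ℕ∞) (derivWithin g (Set.Ici 0)) (Set.Ici 0) :=
        hg.derivWithin (uniqueDiffOn_Ici 0) (by simp)
      have key : Set.EqOn (derivWithin (fun r => f r * g r) (Set.Ici 0))
          (fun r => derivWithin f (Set.Ici 0) r * g r + f r * derivWithin g (Set.Ici 0) r)
          (Set.Ici 0) := by
        intro y hy
        exact derivWithin_fun_mul
          ((hf.differentiableOn (by simp)) y hy) ((hg.differentiableOn (by simp)) y hy)
      rw [iteratedDerivWithin_congr key hx,
        iD_add hx (hDf.mul hg) (hf.mul hDg),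
        ih (derivWithin f (Set.Ici 0)) g hDf hg x hx,
        ih f (derivWithin g (Set.Ici 0)) hf hDg x hx]
      have e1 : ∀ i, iteratedDerivWithin i (derivWithin f (Set.Ici 0)) (Set.Ici 0) x
          = iteratedDerivWithin (i+1) f (Set.Ici 0) x := by
        intro i; rw [iteratedDerivWithin_succ']
      have e2 : ∀ i, iteratedDerivWithin (n-i) (derivWithin g (Set.Ici 0)) (Set.Ici 0) x
          = iteratedDerivWithin (n-i+1) g (Set.Ici 0) x := by
        intro i; rw [iteratedDerivWithin_succ']
      simp only [e1, e2]
      exact pascal_merge n (fun i q => iteratedDerivWithin i f (Set.Ici 0) x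
        * iteratedDerivWithin q g (Set.Ici 0) x)

lemma iD_coord_mul (n : ℕ) :
    ∀ g : ℝ → ℂ, ContDiffOn ℝ (⊤ : ℕ∞) g (Set.Ici 0) →
      iteratedDerivWithin (n+1) (fun r : ℝ => (r:ℂ) * g r) (Set.Ici 0) 0
        = ((n:ℂ)+1) * iteratedDerivWithin n g (Set.Ici 0) 0 := by
  have h0 : (0:ℝ) ∈ Set.Ici (0:ℝ) := Set.self_mem_Ici
  have hcoord : ContDiffOn ℝ (⊤ : ℕ∞) (fun r : ℝ => (r:ℂ)) (Set.Ici 0) :=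
    Complex.ofRealCLM.contDiff.contDiffOn
  have keyD : ∀ g : ℝ → ℂ, ContDiffOn ℝ (⊤ : ℕ∞) g (Set.Ici 0) →
      Set.EqOn (derivWithin (fun r : ℝ => (r:ℂ) * g r) (Set.Ici 0))
        (fun r : ℝ => g r + (r:ℂ) * derivWithin g (Set.Ici 0) r) (Set.Ici 0) := by
    intro g hg y hy
    have huy := (uniqueDiffOn_Ici (0:ℝ)).uniqueDiffWithinAt hy
    have hcd : derivWithin (fun r : ℝ => (r:ℂ)) (Set.Ici 0) y = 1 := by
      have : HasDerivWithinAt (fun r : ℝ => (r:ℂ)) 1 (Set.Ici 0) y := by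
        simpa using (hasDerivAt_id' (x := y)).ofReal_comp.hasDerivWithinAt
      exact this.derivWithin huy
    rw [derivWithin_fun_mul ((hcoord.differentiableOn (by simp)) y hy)
      ((hg.differentiableOn (by simp)) y hy), hcd]
    ring
  induction n with
  | zero =>
      intro g hg
      rw [iteratedDerivWithin_succ']
      simp only [iteratedDerivWithin_zero]
      rw [keyD g hg h0]
      simp
  | succ n ih =>
      intro g hg
      have hDg : ContDiffOn ℝ (⊤ : ℕ∞) (derivWithin g (Set.Ici 0)) (Set.Ici 0) :=
        hg.derivWithin (uniqueDiffOn_Ici 0) (by simp)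
      rw [iteratedDerivWithin_succ',
        iteratedDerivWithin_congr (keyD g hg) h0,
        iD_add h0 hg (hcoord.mul hDg), ih (derivWithin g (Set.Ici 0)) hDg,
        ← iteratedDerivWithin_succ']
      push_cast
      ring

lemma iD_fuchsDW (n : ℕ) {f : ℝ → ℂ} (hf : ContDiffOn ℝ (⊤ : ℕ∞) f (Set.Ici 0)) :
    iteratedDerivWithin n (fuchsDW f) (Set.Ici 0) 0
      = -(n:ℂ) * iteratedDerivWithin n f (Set.Ici 0) 0 := by
  have h0 : (0:ℝ) ∈ Set.Ici (0:ℝ) := Set.self_mem_Ici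
  have hneg : (fuchsDW f) = fun r : ℝ => -((r:ℂ) * derivWithin f (Set.Ici 0) r) := by
    funext r; simp only [fuchsDW, neg_mul]
  rw [hneg, iteratedDerivWithin_fun_neg]
  cases n with
  | zero => simp
  | succ n =>
      rw [iD_coord_mul n (derivWithin f (Set.Ici 0))
        (hf.derivWithin (uniqueDiffOn_Ici 0) (by simp)),
        ← iteratedDerivWithin_succ']
      push_cast
      ring

lemma iD_fuchsDW_iter (p : ℕ) (n : ℕ) {f : ℝ → ℂ} (hf : ContDiffOn ℝ (⊤ : ℕ∞) f (Set.Ici 0)) :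
    iteratedDerivWithin n (fuchsDW^[p] f) (Set.Ici 0) 0
      = (-(n:ℂ))^p * iteratedDerivWithin n f (Set.Ici 0) 0 := by
  induction p with
  | zero => simp
  | succ p ih =>
      rw [Function.iterate_succ_apply', iD_fuchsDW n (fuchsDW_iter_contDiffOn hf p), ih]
      ring

end taylor

section combin
open Finset

lemma pull3 (A B C : Finset ℕ) (G : ℕ → ℕ → ℕ → ℂ) :
    ∑ x ∈ A, ∑ y ∈ B, ∑ z ∈ C, G x y z = ∑ z ∈ C, ∑ x ∈ A, ∑ y ∈ B, G x y z := by
  calc ∑ x ∈ A, ∑ y ∈ B, ∑ z ∈ C, G x y z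
      = ∑ x ∈ A, ∑ z ∈ C, ∑ y ∈ B, G x y z :=
        Finset.sum_congr rfl fun x _ => Finset.sum_comm
    _ = ∑ z ∈ C, ∑ x ∈ A, ∑ y ∈ B, G x y z := Finset.sum_comm

lemma pull4 (A B C D : Finset ℕ) (G : ℕ → ℕ → ℕ → ℕ → ℂ) :
    ∑ w ∈ A, ∑ x ∈ B, ∑ y ∈ C, ∑ z ∈ D, G w x y z
      = ∑ z ∈ D, ∑ w ∈ A, ∑ x ∈ B, ∑ y ∈ C, G w x y z := by
  calc ∑ w ∈ A, ∑ x ∈ B, ∑ y ∈ C, ∑ z ∈ D, G w x y z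
      = ∑ w ∈ A, ∑ z ∈ D, ∑ x ∈ B, ∑ y ∈ C, G w x y z :=
        Finset.sum_congr rfl fun w _ => pull3 B C D (G w)
    _ = ∑ z ∈ D, ∑ w ∈ A, ∑ x ∈ B, ∑ y ∈ C, G w x y z := Finset.sum_comm

lemma pull5 (A B C D E : Finset ℕ) (G : ℕ → ℕ → ℕ → ℕ → ℕ → ℂ) :
    ∑ v ∈ A, ∑ w ∈ B, ∑ x ∈ C, ∑ y ∈ D, ∑ z ∈ E, G v w x y z
      = ∑ z ∈ E, ∑ v ∈ A, ∑ w ∈ B, ∑ x ∈ C, ∑ y ∈ D, G v w x y z := by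
  calc ∑ v ∈ A, ∑ w ∈ B, ∑ x ∈ C, ∑ y ∈ D, ∑ z ∈ E, G v w x y z
      = ∑ v ∈ A, ∑ z ∈ E, ∑ w ∈ B, ∑ x ∈ C, ∑ y ∈ D, G v w x y z :=
        Finset.sum_congr rfl fun v _ => pull4 B C D E (G v)
    _ = ∑ z ∈ E, ∑ v ∈ A, ∑ w ∈ B, ∑ x ∈ C, ∑ y ∈ D, G v w x y z := Finset.sum_comm

lemma poly_expand (μ ν : ℕ) {j : ℕ} (hj : j ≤ μ) (t z : ℂ) :
    ∑ q ∈ range (μ+1), ∑ p ∈ range (μ+1),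
      (j.choose p : ℂ) * ((j-p).choose q : ℂ) * (ν:ℂ)^(j-p-q) * (-t)^p * z^q
    = (z + (ν:ℂ) - t)^j := by
  rw [Finset.sum_comm]
  have hsub : range (j+1) ⊆ range (μ+1) := Finset.range_subset_range.mpr (by omega)
  calc ∑ p ∈ range (μ+1), ∑ q ∈ range (μ+1),
        (j.choose p : ℂ) * ((j-p).choose q : ℂ) * (ν:ℂ)^(j-p-q) * (-t)^p * z^q
      = ∑ p ∈ range (j+1), ∑ q ∈ range (μ+1),
        (j.choose p : ℂ) * ((j-p).choose q : ℂ) * (ν:ℂ)^(j-p-q) * (-t)^p * z^q := by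
        refine (Finset.sum_subset hsub ?_).symm
        intro p _ hp
        refine Finset.sum_eq_zero fun q _ => ?_
        have : j.choose p = 0 := Nat.choose_eq_zero_of_lt (by
          simp only [Finset.mem_range] at hp; omega)
        simp [this]
    _ = ∑ p ∈ range (j+1), (j.choose p : ℂ) * (-t)^p * (z + (ν:ℂ))^(j-p) := by
        refine Finset.sum_congr rfl fun p hp => ?_
        have hpj : p ≤ j := by simpa [Nat.lt_succ_iff] using Finset.mem_range.mp hp
        have hsub2 : range (j-p+1) ⊆ range (μ+1) := Finset.range_subset_range.mpr (by omega)
        calc ∑ q ∈ range (μ+1),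
              (j.choose p : ℂ) * ((j-p).choose q : ℂ) * (ν:ℂ)^(j-p-q) * (-t)^p * z^q
            = ∑ q ∈ range (j-p+1),
              (j.choose p : ℂ) * ((j-p).choose q : ℂ) * (ν:ℂ)^(j-p-q) * (-t)^p * z^q := by
              refine (Finset.sum_subset hsub2 ?_).symm
              intro q _ hq
              have : (j-p).choose q = 0 := Nat.choose_eq_zero_of_lt (by
                simp only [Finset.mem_range] at hq; omega)
              simp [this]
          _ = (j.choose p : ℂ) * (-t)^p
                * ∑ q ∈ range (j-p+1), z^q * (ν:ℂ)^(j-p-q) * ((j-p).choose q : ℂ) := by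
              rw [Finset.mul_sum]
              exact Finset.sum_congr rfl fun q _ => by ring
          _ = (j.choose p : ℂ) * (-t)^p * (z + (ν:ℂ))^(j-p) := by rw [← add_pow]
    _ = (z + (ν:ℂ) - t)^j := by
        have h1 : (-t + (z + (ν:ℂ)))^j
            = ∑ p ∈ range (j+1), (-t)^p * (z + (ν:ℂ))^(j-p) * (j.choose p : ℂ) := add_pow _ _ _
        have h2 : (z + (ν:ℂ) - t) = -t + (z + (ν:ℂ)) := by ring
        rw [h2, h1]
        exact Finset.sum_congr rfl fun p _ => by ring

end combin

end FuchsAux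

open FuchsAux

/-- Composition of Fuchs-type operators and the Mellin translation product:
the composition `AB` of Fuchs-type operators of orders `μ` and `ν` is a
Fuchs-type operator of order `μ+ν`, and its conormal symbols satisfy
`σ^{μ+ν-l}(AB)(z) = Σ_{i+j=l} σ^{μ-i}(A)(z+ν-j)·σ^{ν-j}(B)(z)`. -/
theorem fuchs_composition_mellin_translation_product
    (μ ν : ℕ) (a b : ℕ → ℝ → ℂ)
    (ha : ∀ j ≤ μ, ContDiffOn ℝ (⊤ : ℕ∞) (a j) (Set.Ici 0))
    (hb : ∀ k ≤ ν, ContDiffOn ℝ (⊤ : ℕ∞) (b k) (Set.Ici 0)) :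
    ∃ c : ℕ → ℝ → ℂ,
      (∀ l ≤ μ + ν, ContDiffOn ℝ (⊤ : ℕ∞) (c l) (Set.Ici 0)) ∧
      (∀ u : ℝ → ℂ, ContDiffOn ℝ (⊤ : ℕ∞) u (Set.Ioi 0) → ∀ r : ℝ, 0 < r →
        fuchsOp μ a (fun s => fuchsOp ν b u s) r = fuchsOp (μ + ν) c u r) ∧
      (∀ l : ℕ, ∀ z : ℂ,
        conormalSymbol (μ + ν) c l z
          = ∑ i ∈ range (l + 1),
              conormalSymbol μ a i (z + (ν : ℂ) - ((l - i : ℕ) : ℂ))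
                * conormalSymbol ν b (l - i) z) := by
  classical
  set cst : ℕ → ℕ → ℕ → ℂ :=
    fun j p q => (j.choose p : ℂ) * ((j-p).choose q : ℂ) * (ν:ℂ)^(j-p-q) with hcst
  set h : ℕ → ℕ → ℝ → ℂ := fun k q r => ∑ j ∈ range (μ+1), ∑ p ∈ range (μ+1),
    cst j p q * (a j r * fuchsDW^[p] (b k) r) with hh
  refine ⟨fun m r => ∑ k ∈ range (ν+1), ∑ q ∈ range (μ+1),
    if m = k + q then h k q r else 0, ?_, ?_, ?_⟩
  · -- smoothness
    intro l _
    refine ContDiffOn.sum fun k hk => ContDiffOn.sum fun q hq => ?_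
    have hk' : k ≤ ν := by simpa [Nat.lt_succ_iff] using Finset.mem_range.mp hk
    split_ifs with hc
    · refine ContDiffOn.sum fun j hj => ContDiffOn.sum fun p hp => ?_
      have hj' : j ≤ μ := by simpa [Nat.lt_succ_iff] using Finset.mem_range.mp hj
      exact contDiffOn_const.mul ((ha j hj').mul (fuchsDW_iter_contDiffOn (hb k hk') p))
    · exact contDiffOn_const
  · -- operator identity
    intro u hu r hr
    have hrO : r ∈ Set.Ioi (0:ℝ) := hr
    have hrC : (r:ℂ) ≠ 0 := Complex.ofReal_ne_zero.mpr hr.ne'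
    have hbO : ∀ k ∈ range (ν+1), ContDiffOn ℝ (⊤ : ℕ∞) (b k) (Set.Ioi 0) := fun k hk =>
      (hb k (by simpa [Nat.lt_succ_iff] using Finset.mem_range.mp hk)).mono
        Set.Ioi_subset_Ici_self
    have hDu : ∀ m : ℕ, ContDiffOn ℝ (⊤ : ℕ∞) (fuchsD^[m] u) (Set.Ioi 0) := fun m =>
      fuchsD_iter_contDiffOn_Ioi hu m
    set W : ℝ → ℂ := fun s => ∑ k ∈ range (ν+1), b k s * (fuchsD^[k] u) s with hWdef
    have hWs : ContDiffOn ℝ (⊤ : ℕ∞) W (Set.Ioi 0) :=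
      ContDiffOn.sum fun k hk => (hbO k hk).mul (hDu k)
    -- expansion of the iterated shifted operator applied to W
    have hEj : ∀ j ∈ range (μ+1), (fuchsE ν)^[j] W r
        = ∑ k ∈ range (ν+1), ∑ p ∈ range (μ+1), ∑ q ∈ range (μ+1),
            cst j p q * ((fuchsD^[p] (b k)) r * (fuchsD^[k+q] u) r) := by
      intro j hj
      have hj' : j ≤ μ := by simpa [Nat.lt_succ_iff] using Finset.mem_range.mp hj
      rw [hWdef]
      rw [fuchsE_iter_sum (range (ν+1)) (fun k => fun s => b k s * (fuchsD^[k] u) s)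
        (fun k hk => (hbO k hk).mul (hDu k)) j r hrO]
      refine Finset.sum_congr rfl fun k hk => ?_
      rw [fuchsE_iter_leibniz ν j (b k) (fuchsD^[k] u) (hbO k hk) (hDu k) r hrO]
      calc ∑ p ∈ range (j+1), (j.choose p : ℂ) *
              ((fuchsD^[p] (b k)) r * ((fuchsE ν)^[j-p] (fuchsD^[k] u)) r)
          = ∑ p ∈ range (j+1), ∑ q ∈ range (μ+1),
              cst j p q * ((fuchsD^[p] (b k)) r * (fuchsD^[k+q] u) r) := by
            refine Finset.sum_congr rfl fun p hp => ?_
            have hp' : p ≤ j := by simpa [Nat.lt_succ_iff] using Finset.mem_range.mp hp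
            rw [fuchsE_iter_binom ν (j-p) (fuchsD^[k] u) (hDu k) r hrO]
            have hq1 : ∀ q : ℕ, (fuchsD^[q] (fuchsD^[k] u)) r = (fuchsD^[k+q] u) r := by
              intro q
              rw [Nat.add_comm k q, Function.iterate_add_apply]
            calc (j.choose p : ℂ) * ((fuchsD^[p] (b k)) r
                  * ∑ q ∈ range (j-p+1), ((j-p).choose q : ℂ)
                      * ((ν:ℂ)^(j-p-q) * (fuchsD^[q] (fuchsD^[k] u)) r))
                = ∑ q ∈ range (j-p+1),
                    cst j p q * ((fuchsD^[p] (b k)) r * (fuchsD^[k+q] u) r) := by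
                  rw [Finset.mul_sum, Finset.mul_sum]
                  refine Finset.sum_congr rfl fun q _ => ?_
                  rw [hq1 q, hcst]
                  ring
              _ = ∑ q ∈ range (μ+1),
                    cst j p q * ((fuchsD^[p] (b k)) r * (fuchsD^[k+q] u) r) := by
                  refine Finset.sum_subset (Finset.range_subset_range.mpr (by omega)) ?_
                  intro q _ hq
                  have : (j-p).choose q = 0 := Nat.choose_eq_zero_of_lt (by
                    simp only [Finset.mem_range] at hq; omega)
                  simp [hcst, this]
        _ = ∑ p ∈ range (μ+1), ∑ q ∈ range (μ+1),
              cst j p q * ((fuchsD^[p] (b k)) r * (fuchsD^[k+q] u) r) := by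
            refine Finset.sum_subset (Finset.range_subset_range.mpr (by omega)) ?_
            intro p _ hp
            refine Finset.sum_eq_zero fun q _ => ?_
            have : j.choose p = 0 := Nat.choose_eq_zero_of_lt (by
              simp only [Finset.mem_range] at hp; omega)
            simp [hcst, this]
    -- left-hand side
    have lhs_eq : fuchsOp μ a (fun s => fuchsOp ν b u s) r
        = (r:ℂ)^(-(μ:ℤ)) * ∑ j ∈ range (μ+1), a j r *
            ((r:ℂ)^(-(ν:ℤ)) * (fuchsE ν)^[j] W r) := by
      show (r:ℂ)^(-(μ:ℤ)) * (∑ j ∈ range (μ+1),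
          a j r * (fuchsD^[j] (fun s => fuchsOp ν b u s)) r) = _
      refine congrArg _ (Finset.sum_congr rfl fun j _ => congrArg (a j r * ·) ?_)
      exact conj_zpow ν j W hWs r hrO
    rw [lhs_eq]
    -- right-hand side
    show _ = (r:ℂ)^(-((μ+ν:ℕ):ℤ)) * ∑ m ∈ range (μ+ν+1),
        (∑ k ∈ range (ν+1), ∑ q ∈ range (μ+1), if m = k + q then h k q r else 0)
          * (fuchsD^[m] u) r
    have rhs_inner : ∑ m ∈ range (μ+ν+1),
        (∑ k ∈ range (ν+1), ∑ q ∈ range (μ+1), if m = k + q then h k q r else 0)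
          * (fuchsD^[m] u) r
        = ∑ k ∈ range (ν+1), ∑ q ∈ range (μ+1), h k q r * (fuchsD^[k+q] u) r := by
      calc ∑ m ∈ range (μ+ν+1), (∑ k ∈ range (ν+1), ∑ q ∈ range (μ+1),
              if m = k + q then h k q r else 0) * (fuchsD^[m] u) r
          = ∑ m ∈ range (μ+ν+1), ∑ k ∈ range (ν+1), ∑ q ∈ range (μ+1),
              (if m = k + q then h k q r * (fuchsD^[m] u) r else 0) := by
            refine Finset.sum_congr rfl fun m _ => ?_
            rw [Finset.sum_mul]
            refine Finset.sum_congr rfl fun k _ => ?_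
            rw [Finset.sum_mul]
            refine Finset.sum_congr rfl fun q _ => ?_
            rw [ite_mul, zero_mul]
        _ = ∑ k ∈ range (ν+1), ∑ q ∈ range (μ+1), ∑ m ∈ range (μ+ν+1),
              (if m = k + q then h k q r * (fuchsD^[m] u) r else 0) := by
            rw [Finset.sum_comm]
            exact Finset.sum_congr rfl fun k _ => Finset.sum_comm
        _ = ∑ k ∈ range (ν+1), ∑ q ∈ range (μ+1), h k q r * (fuchsD^[k+q] u) r := by
            refine Finset.sum_congr rfl fun k hk => Finset.sum_congr rfl fun q hq => ?_
            rw [Finset.sum_ite_eq' (range (μ+ν+1)) (k+q)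
              (fun m => h k q r * (fuchsD^[m] u) r)]
            have hk' : k ≤ ν := by simpa [Nat.lt_succ_iff] using Finset.mem_range.mp hk
            have hq' : q ≤ μ := by simpa [Nat.lt_succ_iff] using Finset.mem_range.mp hq
            rw [if_pos (Finset.mem_range.mpr (by omega))]
    rw [rhs_inner]
    -- power bookkeeping and final reordering
    have hpow : (r:ℂ)^(-(μ:ℤ)) * (r:ℂ)^(-(ν:ℤ)) = (r:ℂ)^(-((μ+ν:ℕ):ℤ)) := by
      rw [← zpow_add₀ hrC]
      congr 1
      push_cast
      ring
    calc (r:ℂ)^(-(μ:ℤ)) * ∑ j ∈ range (μ+1), a j r *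
            ((r:ℂ)^(-(ν:ℤ)) * (fuchsE ν)^[j] W r)
        = (r:ℂ)^(-((μ+ν:ℕ):ℤ)) * ∑ j ∈ range (μ+1), a j r * (fuchsE ν)^[j] W r := by
          rw [← hpow, Finset.mul_sum, Finset.mul_sum]
          refine Finset.sum_congr rfl fun j _ => ?_
          ring
      _ = (r:ℂ)^(-((μ+ν:ℕ):ℤ)) * ∑ k ∈ range (ν+1), ∑ q ∈ range (μ+1),
            h k q r * (fuchsD^[k+q] u) r := by
          refine congrArg _ ?_
          calc ∑ j ∈ range (μ+1), a j r * (fuchsE ν)^[j] W r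
              = ∑ j ∈ range (μ+1), ∑ k ∈ range (ν+1), ∑ p ∈ range (μ+1),
                  ∑ q ∈ range (μ+1), a j r *
                    (cst j p q * ((fuchsD^[p] (b k)) r * (fuchsD^[k+q] u) r)) := by
                refine Finset.sum_congr rfl fun j hj => ?_
                rw [hEj j hj, Finset.mul_sum]
                refine Finset.sum_congr rfl fun k _ => ?_
                rw [Finset.mul_sum]
                refine Finset.sum_congr rfl fun p _ => ?_
                rw [Finset.mul_sum]
            _ = ∑ k ∈ range (ν+1), ∑ j ∈ range (μ+1), ∑ p ∈ range (μ+1),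
                  ∑ q ∈ range (μ+1), a j r *
                    (cst j p q * ((fuchsD^[p] (b k)) r * (fuchsD^[k+q] u) r)) :=
                Finset.sum_comm
            _ = ∑ k ∈ range (ν+1), ∑ q ∈ range (μ+1), ∑ j ∈ range (μ+1),
                  ∑ p ∈ range (μ+1), a j r *
                    (cst j p q * ((fuchsD^[p] (b k)) r * (fuchsD^[k+q] u) r)) :=
                Finset.sum_congr rfl fun k _ => pull3 _ _ _ _
            _ = ∑ k ∈ range (ν+1), ∑ q ∈ range (μ+1),
                  h k q r * (fuchsD^[k+q] u) r := by
                refine Finset.sum_congr rfl fun k hk =>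
                  Finset.sum_congr rfl fun q _ => ?_
                rw [hh]
                simp only [Finset.sum_mul]
                refine Finset.sum_congr rfl fun j _ => Finset.sum_congr rfl fun p _ => ?_
                rw [fuchsDW_iter_eq (b k) p r hrO]
                ring
  · -- conormal symbols
    intro l z
    have h0 : (0:ℝ) ∈ Set.Ici (0:ℝ) := Set.self_mem_Ici
    have haS : ∀ j ∈ range (μ+1), ContDiffOn ℝ (⊤ : ℕ∞) (a j) (Set.Ici 0) := fun j hj =>
      ha j (by simpa [Nat.lt_succ_iff] using Finset.mem_range.mp hj)
    have hbS : ∀ k ∈ range (ν+1), ContDiffOn ℝ (⊤ : ℕ∞) (b k) (Set.Ici 0) := fun k hk =>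
      hb k (by simpa [Nat.lt_succ_iff] using Finset.mem_range.mp hk)
    have hGsm : ∀ k ∈ range (ν+1), ∀ q j, j ∈ range (μ+1) → ∀ p : ℕ,
        ContDiffOn ℝ (⊤ : ℕ∞) (fun r => cst j p q * (a j r * fuchsDW^[p] (b k) r)) (Set.Ici 0) :=
      fun k hk q j hj p => contDiffOn_const.mul
        ((haS j hj).mul (fuchsDW_iter_contDiffOn (hbS k hk) p))
    -- Taylor coefficient of h k q
    have hTh : ∀ k ∈ range (ν+1), ∀ q : ℕ,
        iteratedDerivWithin l (h k q) (Set.Ici 0) 0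
          = ∑ j ∈ range (μ+1), ∑ p ∈ range (μ+1), ∑ i ∈ range (l+1),
              cst j p q * ((l.choose i : ℂ) *
                (iteratedDerivWithin i (a j) (Set.Ici 0) 0 *
                  ((-((l-i : ℕ):ℂ))^p * iteratedDerivWithin (l-i) (b k) (Set.Ici 0) 0))) := by
      intro k hk q
      calc iteratedDerivWithin l (h k q) (Set.Ici 0) 0
          = ∑ j ∈ range (μ+1), iteratedDerivWithin l
              (fun r => ∑ p ∈ range (μ+1), cst j p q * (a j r * fuchsDW^[p] (b k) r))
              (Set.Ici 0) 0 :=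
            iD_sum (range (μ+1))
              (fun j r => ∑ p ∈ range (μ+1), cst j p q * (a j r * fuchsDW^[p] (b k) r))
              (fun j hj => ContDiffOn.sum fun p _ => hGsm k hk q j hj p) l h0
        _ = ∑ j ∈ range (μ+1), ∑ p ∈ range (μ+1), iteratedDerivWithin l
              (fun r => cst j p q * (a j r * fuchsDW^[p] (b k) r)) (Set.Ici 0) 0 := by
            refine Finset.sum_congr rfl fun j hj => ?_
            exact iD_sum (range (μ+1))
              (fun p r => cst j p q * (a j r * fuchsDW^[p] (b k) r))
              (fun p _ => hGsm k hk q j hj p) l h0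
        _ = ∑ j ∈ range (μ+1), ∑ p ∈ range (μ+1), ∑ i ∈ range (l+1),
              cst j p q * ((l.choose i : ℂ) *
                (iteratedDerivWithin i (a j) (Set.Ici 0) 0 *
                  ((-((l-i : ℕ):ℂ))^p * iteratedDerivWithin (l-i) (b k) (Set.Ici 0) 0))) := by
            refine Finset.sum_congr rfl fun j hj => Finset.sum_congr rfl fun p _ => ?_
            rw [iD_const_mul h0 (cst j p q)
              ((haS j hj).mul (fuchsDW_iter_contDiffOn (hbS k hk) p)),
              iD_mul l (a j) (fuchsDW^[p] (b k)) (haS j hj)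
                (fuchsDW_iter_contDiffOn (hbS k hk) p) 0 h0,
              Finset.mul_sum]
            refine Finset.sum_congr rfl fun i _ => ?_
            rw [iD_fuchsDW_iter p (l-i) (hbS k hk)]
    -- Taylor coefficient of c m
    have hTc : ∀ m : ℕ,
        iteratedDerivWithin l
          (fun r => ∑ k ∈ range (ν+1), ∑ q ∈ range (μ+1), if m = k + q then h k q r else 0)
          (Set.Ici 0) 0
        = ∑ k ∈ range (ν+1), ∑ q ∈ range (μ+1),
            if m = k + q then iteratedDerivWithin l (h k q) (Set.Ici 0) 0 else 0 := by
      intro m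
      have hsm2 : ∀ k ∈ range (ν+1), ∀ q ∈ range (μ+1),
          ContDiffOn ℝ (⊤ : ℕ∞) (fun r => if m = k + q then h k q r else 0) (Set.Ici 0) := by
        intro k hk q hq
        split_ifs with hc
        · rw [hh]
          exact ContDiffOn.sum fun j hj => ContDiffOn.sum fun p _ => hGsm k hk q j hj p
        · exact contDiffOn_const
      calc iteratedDerivWithin l
            (fun r => ∑ k ∈ range (ν+1), ∑ q ∈ range (μ+1), if m = k + q then h k q r else 0)
            (Set.Ici 0) 0
          = ∑ k ∈ range (ν+1), iteratedDerivWithin l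
              (fun r => ∑ q ∈ range (μ+1), if m = k + q then h k q r else 0) (Set.Ici 0) 0 :=
            iD_sum (range (ν+1))
              (fun k r => ∑ q ∈ range (μ+1), if m = k + q then h k q r else 0)
              (fun k hk => ContDiffOn.sum fun q hq => hsm2 k hk q hq) l h0
        _ = ∑ k ∈ range (ν+1), ∑ q ∈ range (μ+1), iteratedDerivWithin l
              (fun r => if m = k + q then h k q r else 0) (Set.Ici 0) 0 := by
            refine Finset.sum_congr rfl fun k hk => ?_
            exact iD_sum (range (μ+1))
              (fun q r => if m = k + q then h k q r else 0)
              (fun q hq => hsm2 k hk q hq) l h0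
        _ = ∑ k ∈ range (ν+1), ∑ q ∈ range (μ+1),
              if m = k + q then iteratedDerivWithin l (h k q) (Set.Ici 0) 0 else 0 := by
            refine Finset.sum_congr rfl fun k _ => Finset.sum_congr rfl fun q _ => ?_
            by_cases hc : m = k + q
            · simp only [if_pos hc]
            · simp only [if_neg hc]
              exact iD_zero_fun l h0
    -- assemble the left-hand side
    have key : ∑ m ∈ range (μ+ν+1),
        iteratedDerivWithin l
          (fun r => ∑ k ∈ range (ν+1), ∑ q ∈ range (μ+1), if m = k + q then h k q r else 0)
          (Set.Ici 0) 0 * z ^ m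
        = ∑ i ∈ range (l+1), ∑ j ∈ range (μ+1), ∑ k ∈ range (ν+1),
            ∑ q ∈ range (μ+1), ∑ p ∈ range (μ+1),
            (l.choose i : ℂ) * cst j p q *
              (iteratedDerivWithin i (a j) (Set.Ici 0) 0 *
                iteratedDerivWithin (l-i) (b k) (Set.Ici 0) 0) *
              ((-((l-i : ℕ):ℂ))^p * z^(k+q)) := by
      calc ∑ m ∈ range (μ+ν+1),
            iteratedDerivWithin l
              (fun r => ∑ k ∈ range (ν+1), ∑ q ∈ range (μ+1), if m = k + q then h k q r else 0)
              (Set.Ici 0) 0 * z ^ m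
          = ∑ m ∈ range (μ+ν+1), ∑ k ∈ range (ν+1), ∑ q ∈ range (μ+1),
              (if m = k + q then iteratedDerivWithin l (h k q) (Set.Ici 0) 0 * z^m else 0) := by
            refine Finset.sum_congr rfl fun m _ => ?_
            rw [hTc m, Finset.sum_mul]
            refine Finset.sum_congr rfl fun k _ => ?_
            rw [Finset.sum_mul]
            refine Finset.sum_congr rfl fun q _ => ?_
            rw [ite_mul, zero_mul]
        _ = ∑ k ∈ range (ν+1), ∑ q ∈ range (μ+1), ∑ m ∈ range (μ+ν+1),
              (if m = k + q then iteratedDerivWithin l (h k q) (Set.Ici 0) 0 * z^m else 0) := by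
            rw [Finset.sum_comm]
            exact Finset.sum_congr rfl fun k _ => Finset.sum_comm
        _ = ∑ k ∈ range (ν+1), ∑ q ∈ range (μ+1),
              iteratedDerivWithin l (h k q) (Set.Ici 0) 0 * z^(k+q) := by
            refine Finset.sum_congr rfl fun k hk => Finset.sum_congr rfl fun q hq => ?_
            rw [Finset.sum_ite_eq' (range (μ+ν+1)) (k+q)
              (fun m => iteratedDerivWithin l (h k q) (Set.Ici 0) 0 * z^m)]
            have hk' : k ≤ ν := by simpa [Nat.lt_succ_iff] using Finset.mem_range.mp hk
            have hq' : q ≤ μ := by simpa [Nat.lt_succ_iff] using Finset.mem_range.mp hq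
            rw [if_pos (Finset.mem_range.mpr (by omega))]
        _ = ∑ k ∈ range (ν+1), ∑ q ∈ range (μ+1), ∑ j ∈ range (μ+1),
              ∑ p ∈ range (μ+1), ∑ i ∈ range (l+1),
              (l.choose i : ℂ) * cst j p q *
                (iteratedDerivWithin i (a j) (Set.Ici 0) 0 *
                  iteratedDerivWithin (l-i) (b k) (Set.Ici 0) 0) *
                ((-((l-i : ℕ):ℂ))^p * z^(k+q)) := by
            refine Finset.sum_congr rfl fun k hk => Finset.sum_congr rfl fun q _ => ?_
            rw [hTh k hk q]
            simp only [Finset.sum_mul]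
            refine Finset.sum_congr rfl fun j _ => Finset.sum_congr rfl fun p _ =>
              Finset.sum_congr rfl fun i _ => ?_
            ring
        _ = ∑ i ∈ range (l+1), ∑ k ∈ range (ν+1), ∑ q ∈ range (μ+1),
              ∑ j ∈ range (μ+1), ∑ p ∈ range (μ+1),
              (l.choose i : ℂ) * cst j p q *
                (iteratedDerivWithin i (a j) (Set.Ici 0) 0 *
                  iteratedDerivWithin (l-i) (b k) (Set.Ici 0) 0) *
                ((-((l-i : ℕ):ℂ))^p * z^(k+q)) := pull5 _ _ _ _ _ _
        _ = ∑ i ∈ range (l+1), ∑ j ∈ range (μ+1), ∑ k ∈ range (ν+1),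
              ∑ q ∈ range (μ+1), ∑ p ∈ range (μ+1),
              (l.choose i : ℂ) * cst j p q *
                (iteratedDerivWithin i (a j) (Set.Ici 0) 0 *
                  iteratedDerivWithin (l-i) (b k) (Set.Ici 0) 0) *
                ((-((l-i : ℕ):ℂ))^p * z^(k+q)) :=
            Finset.sum_congr rfl fun i _ => pull3 _ _ _ _
    -- now the main computation
    show (1 / (l.factorial : ℂ)) * ∑ m ∈ range (μ+ν+1),
        iteratedDerivWithin l
          (fun r => ∑ k ∈ range (ν+1), ∑ q ∈ range (μ+1), if m = k + q then h k q r else 0)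
          (Set.Ici 0) 0 * z ^ m = _
    rw [key]
    -- expand the right-hand side
    have rhs_eq : ∀ i ∈ range (l+1),
        conormalSymbol μ a i (z + (ν : ℂ) - ((l - i : ℕ) : ℂ)) * conormalSymbol ν b (l - i) z
        = ∑ j ∈ range (μ+1), ∑ k ∈ range (ν+1), ∑ q ∈ range (μ+1), ∑ p ∈ range (μ+1),
            (1 / (i.factorial : ℂ)) * (1 / ((l-i).factorial : ℂ)) *
              (iteratedDerivWithin i (a j) (Set.Ici 0) 0 *
                iteratedDerivWithin (l-i) (b k) (Set.Ici 0) 0) *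
              (cst j p q * (-((l-i : ℕ):ℂ))^p * z^q * z^k) := by
      intro i _
      calc conormalSymbol μ a i (z + (ν : ℂ) - ((l - i : ℕ) : ℂ)) * conormalSymbol ν b (l - i) z
          = (1 / (i.factorial : ℂ)) * (1 / ((l-i).factorial : ℂ)) *
              ∑ j ∈ range (μ+1), ∑ k ∈ range (ν+1),
                (iteratedDerivWithin i (a j) (Set.Ici 0) 0 *
                  iteratedDerivWithin (l-i) (b k) (Set.Ici 0) 0) *
                ((z + (ν : ℂ) - ((l - i : ℕ) : ℂ))^j * z^k) := by
            rw [conormalSymbol, conormalSymbol, mul_mul_mul_comm, Finset.sum_mul_sum]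
            refine congrArg _ (Finset.sum_congr rfl fun j _ =>
              Finset.sum_congr rfl fun k _ => ?_)
            ring
        _ = ∑ j ∈ range (μ+1), ∑ k ∈ range (ν+1), ∑ q ∈ range (μ+1), ∑ p ∈ range (μ+1),
            (1 / (i.factorial : ℂ)) * (1 / ((l-i).factorial : ℂ)) *
              (iteratedDerivWithin i (a j) (Set.Ici 0) 0 *
                iteratedDerivWithin (l-i) (b k) (Set.Ici 0) 0) *
              (cst j p q * (-((l-i : ℕ):ℂ))^p * z^q * z^k) := by
            simp only [Finset.mul_sum]
            refine Finset.sum_congr rfl fun j hj => ?_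
            have hj' : j ≤ μ := by simpa [Nat.lt_succ_iff] using Finset.mem_range.mp hj
            refine Finset.sum_congr rfl fun k _ => ?_
            rw [← poly_expand μ ν hj' ((l - i : ℕ) : ℂ) z]
            simp only [Finset.mul_sum, Finset.sum_mul]
            refine Finset.sum_congr rfl fun q _ => Finset.sum_congr rfl fun p _ => ?_
            simp only [hcst]
            ring
    rw [Finset.sum_congr rfl rhs_eq]
    -- final coefficient comparison
    simp only [Finset.mul_sum]
    refine Finset.sum_congr rfl fun i hi => Finset.sum_congr rfl fun j _ =>
      Finset.sum_congr rfl fun k _ => Finset.sum_congr rfl fun q _ =>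
      Finset.sum_congr rfl fun p _ => ?_
    have hi' : i ≤ l := by simpa [Nat.lt_succ_iff] using Finset.mem_range.mp hi
    have hfact : (l.choose i : ℂ) * (i.factorial : ℂ) * ((l-i).factorial : ℂ)
        = (l.factorial : ℂ) := by
      exact_mod_cast congrArg (Nat.cast : ℕ → ℂ)
        (Nat.choose_mul_factorial_mul_factorial hi')
    have hne1 : (l.factorial : ℂ) ≠ 0 := Nat.cast_ne_zero.mpr l.factorial_ne_zero
    have hne2 : (i.factorial : ℂ) ≠ 0 := Nat.cast_ne_zero.mpr i.factorial_ne_zero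
    have hne3 : ((l-i).factorial : ℂ) ≠ 0 := Nat.cast_ne_zero.mpr (l-i).factorial_ne_zero
    have hcoef : (1 / (l.factorial : ℂ)) * (l.choose i : ℂ)
        = (1 / (i.factorial : ℂ)) * (1 / ((l-i).factorial : ℂ)) := by
      field_simp
      linear_combination hfact
    have hzz : z^(k+q) = z^k * z^q := pow_add z k q
    calc (1 / (l.factorial : ℂ)) * ((l.choose i : ℂ) * cst j p q *
            (iteratedDerivWithin i (a j) (Set.Ici 0) 0 *
              iteratedDerivWithin (l-i) (b k) (Set.Ici 0) 0) *
            ((-((l-i : ℕ):ℂ))^p * z^(k+q)))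
        = ((1 / (l.factorial : ℂ)) * (l.choose i : ℂ)) * (cst j p q *
            (iteratedDerivWithin i (a j) (Set.Ici 0) 0 *
              iteratedDerivWithin (l-i) (b k) (Set.Ici 0) 0) *
            ((-((l-i : ℕ):ℂ))^p * (z^k * z^q))) := by rw [hzz]; ring
      _ = (1 / (i.factorial : ℂ)) * (1 / ((l-i).factorial : ℂ)) *
            (iteratedDerivWithin i (a j) (Set.Ici 0) 0 *
              iteratedDerivWithin (l-i) (b k) (Set.Ici 0) 0) *
            (cst j p q * (-((l-i : ℕ):ℂ))^p * z^q * z^k) := by rw [hcoef]; ring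
end
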